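/- arXiv:1412.1270 — 4 statements merged into one kernel-verified Lean document; each statement's English description precedes it below -/
import Mathlib

section
/- For every integer r ≥ 6, every connected r-uniform hypergraph H with spectral radius ρ(H) ≤ (r−1)!·(2+√5)^{1/r} is reducible; that is, every edge of H contains at least one vertex of degree 1. -/
open Finset

/-- A hypergraph on vertex type `V`, given by its finite set of edges. -/
structure Hypergraph' (V : Type) [DecidableEq V] where
  edges : Finset (Finset V)

namespace Hypergraph'

variable {V : Type} [DecidableEq V]

/-- The vertex set of `H`: all vertices lying in some edge. -/
def vertexSet (H : Hypergraph' V) : Finset V := H.edges.biUnion id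

/-- `H` is `r`-uniform: every edge has exactly `r` vertices. -/
def IsUniform (H : Hypergraph' V) (r : ℕ) : Prop := ∀ e ∈ H.edges, e.card = r

/-- The degree of a vertex: the number of edges containing it. -/
def degree (H : Hypergraph' V) (v : V) : ℕ := (H.edges.filter fun e => v ∈ e).card

/-- The spectral radius of an `r`-uniform hypergraph `H`:
`ρ(H) = r! · max{ (∑_{e ∈ E} ∏_{v ∈ e} x_v) / (∑_v x_v ^ r) : x ≥ 0, x ≠ 0 }`. -/
noncomputable def spectralRadius (H : Hypergraph' V) (r : ℕ) : ℝ :=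
  (Nat.factorial r : ℝ) *
    sSup {t : ℝ | ∃ x : V → ℝ, (∀ v, 0 ≤ x v) ∧ (∃ v ∈ H.vertexSet, x v ≠ 0) ∧
      t = (∑ e ∈ H.edges, ∏ v ∈ e, x v) / (∑ v ∈ H.vertexSet, x v ^ r)}

/-- `v, e` form a walk `v 0, e 0, v 1, e 1, …, e (l-1), v l` in `H`. -/
def IsWalkSeq (H : Hypergraph' V) {l : ℕ} (v : Fin (l + 1) → V) (e : Fin l → Finset V) : Prop :=
  ∀ i : Fin l, e i ∈ H.edges ∧ v i.castSucc ∈ e i ∧ v i.succ ∈ e i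

/-- `H` is connected: every two vertices are joined by a walk. -/
def Connected (H : Hypergraph' V) : Prop :=
  ∀ u ∈ H.vertexSet, ∀ w ∈ H.vertexSet,
    ∃ (l : ℕ) (v : Fin (l + 1) → V) (e : Fin l → Finset V),
      H.IsWalkSeq v e ∧ v 0 = u ∧ v (Fin.last l) = w

/-- The cyclic successor on `Fin l`. -/
def cyc {l : ℕ} (i : Fin l) : Fin l := ⟨((i : ℕ) + 1) % l, Nat.mod_lt _ i.pos⟩

/-- `v, e` form a cycle `v 0, e 0, v 1, e 1, …, e (l-1), v 0` of length `l` in `H`,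
with all vertices and all edges distinct. -/
def IsCycleSeq (H : Hypergraph' V) {l : ℕ} (v : Fin l → V) (e : Fin l → Finset V) : Prop :=
  Function.Injective v ∧ Function.Injective e ∧
    ∀ i : Fin l, e i ∈ H.edges ∧ v i ∈ e i ∧ v (cyc i) ∈ e i

/-- `H` contains a cycle. -/
def HasCycle (H : Hypergraph' V) : Prop :=
  ∃ l : ℕ, 2 ≤ l ∧ ∃ (v : Fin l → V) (e : Fin l → Finset V), H.IsCycleSeq v e

/-- A hypertree: connected and acyclic. -/
def IsHypertree (H : Hypergraph' V) : Prop := H.Connected ∧ ¬H.HasCycle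

/-- `H` is irreducible: some edge has all of its vertices of degree at least `2`. -/
def Irreducible (H : Hypergraph' V) : Prop := ∃ e ∈ H.edges, ∀ v ∈ e, 2 ≤ H.degree v

end Hypergraph'

open Hypergraph'

lemma sqrt5_key : (2 + Real.sqrt 5 : ℝ) ^ ((1:ℝ)/6) * ((2 + Real.sqrt 5) - 1) < 2 + Real.sqrt 5 := by
  have hs : Real.sqrt 5 ^ 2 = 5 := Real.sq_sqrt (by norm_num)
  have hs0 : 0 < Real.sqrt 5 := Real.sqrt_pos.mpr (by norm_num)
  set s := Real.sqrt 5 with hsdef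
  set b : ℝ := (2 + s) ^ ((1:ℝ)/6) with hb
  have hb0 : 0 < b := Real.rpow_pos_of_pos (by linarith) _
  have hb6 : b ^ (6:ℕ) = 2 + s := by
    rw [hb, ← Real.rpow_natCast ((2+s) ^ ((1:ℝ)/6)) 6, ← Real.rpow_mul (by linarith)]
    norm_num
  have hblt : b < (3 + s)/4 := by
    apply lt_of_pow_lt_pow_left₀ 6 (by linarith)
    rw [hb6]
    have h6 : ((3 + s)/4) ^ (6:ℕ) = (161 + 72*s)/64 := by
      linear_combination ((s^4 + 18*s^3 + 140*s^2 + 630*s + 1915)/4096) * hs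
    rw [h6]; linarith
  nlinarith [mul_pos (sub_pos.mpr hblt) (show (0:ℝ) < 1 + s by linarith)]

lemma lam_key {r : ℕ} (hr : 6 ≤ r) :
    (2 + Real.sqrt 5 : ℝ) ^ ((1:ℝ)/(r:ℝ)) * ((2 + Real.sqrt 5) - 1) < 2 + Real.sqrt 5 := by
  have hs0 : 0 < Real.sqrt 5 := Real.sqrt_pos.mpr (by norm_num)
  have h1 : (2 + Real.sqrt 5 :ℝ) ^ ((1:ℝ)/(r:ℝ)) ≤ (2 + Real.sqrt 5) ^ ((1:ℝ)/6) := by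
    apply Real.rpow_le_rpow_of_exponent_le (by linarith)
    have h6 : (6:ℝ) ≤ (r:ℝ) := by exact_mod_cast hr
    rw [div_le_div_iff₀ (by positivity) (by norm_num)]
    linarith
  have h2 := sqrt5_key
  have h3 : (0:ℝ) ≤ (2 + Real.sqrt 5) - 1 := by linarith
  nlinarith [mul_le_mul_of_nonneg_right h1 h3]
lemma bddAbove_spec {V : Type} [DecidableEq V] (H : Hypergraph' V) {r : ℕ} (hr : 0 < r)
    (huni : H.IsUniform r) :
    BddAbove {t : ℝ | ∃ x : V → ℝ, (∀ v, 0 ≤ x v) ∧ (∃ v ∈ H.vertexSet, x v ≠ 0) ∧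
      t = (∑ e ∈ H.edges, ∏ v ∈ e, x v) / (∑ v ∈ H.vertexSet, x v ^ r)} := by
  refine ⟨(H.edges.card : ℝ), ?_⟩
  rintro t ⟨x, hx, ⟨v₀, hv₀, hx₀⟩, rfl⟩
  have hDpos : 0 < ∑ v ∈ H.vertexSet, x v ^ r := by
    calc (0:ℝ) < x v₀ ^ r := pow_pos ((hx v₀).lt_of_ne (Ne.symm hx₀)) r
      _ ≤ _ := Finset.single_le_sum (fun v _ => pow_nonneg (hx v) r) hv₀
  rw [div_le_iff₀ hDpos]
  calc ∑ e ∈ H.edges, ∏ v ∈ e, x v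
      ≤ ∑ _e ∈ H.edges, ∑ v ∈ H.vertexSet, x v ^ r := by
        apply Finset.sum_le_sum
        intro e he
        have hec : e.card = r := huni e he
        have hene : e.Nonempty := Finset.card_pos.mp (by omega)
        obtain ⟨w, hw, hmax⟩ := Finset.exists_max_image e x hene
        calc ∏ v ∈ e, x v ≤ ∏ _v ∈ e, x w :=
              Finset.prod_le_prod (fun v _ => hx v) (fun v hv => hmax v hv)
          _ = x w ^ r := by rw [Finset.prod_const, hec]
          _ ≤ _ := Finset.single_le_sum (fun v _ => pow_nonneg (hx v) r)
                (Finset.mem_biUnion.mpr ⟨e, he, hw⟩)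
    _ = (H.edges.card : ℝ) * ∑ v ∈ H.vertexSet, x v ^ r := by
        rw [Finset.sum_const, nsmul_eq_mul]
set_option maxHeartbeats 1000000 in
/-- **Theorem 3 (second part).**  For `r ≥ 6`, every connected `r`-uniform hypergraph
with spectral radius at most `(r−1)!·(2+√5)^{1/r}` is reducible: every edge contains a
vertex of degree 1. -/
theorem reducible_of_small_spectralRadius {V : Type} [DecidableEq V] (r : ℕ) (hr : 6 ≤ r)
    (H : Hypergraph' V) (huni : H.IsUniform r) (hconn : H.Connected)
    (hrho : H.spectralRadius r ≤
      (Nat.factorial (r - 1) : ℝ) * (2 + Real.sqrt 5) ^ ((1 : ℝ) / (r : ℝ))) :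
    ∀ e ∈ H.edges, ∃ v ∈ e, H.degree v = 1 := by
  classical
  intro e0 he0
  by_contra hno
  push_neg at hno
  have hs0 : 0 < Real.sqrt 5 := Real.sqrt_pos.mpr (by norm_num)
  have hkey0 := lam_key hr
  set a : ℝ := 2 + Real.sqrt 5 with ha_def
  have ha1 : (1:ℝ) < a := by rw [ha_def]; linarith
  have hr0 : 0 < r := by omega
  have hrR : (0:ℝ) < (r:ℝ) := by exact_mod_cast hr0
  set lam : ℝ := a ^ ((1:ℝ)/(r:ℝ)) with hlam_def
  have hlam1 : 1 < lam := by
    rw [hlam_def]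
    exact (Real.one_lt_rpow_iff_of_pos (by linarith)).mpr (Or.inl ⟨ha1, by positivity⟩)
  have hlam0 : 0 < lam := by linarith
  have hlampow : lam ^ r = a := by
    rw [hlam_def, ← Real.rpow_natCast (a ^ ((1:ℝ)/(r:ℝ))) r, ← Real.rpow_mul (by linarith)]
    rw [one_div, inv_mul_cancel₀ hrR.ne', Real.rpow_one]
  have hkey : lam * (a - 1) < a := hkey0
  -- each vertex of e0 lies in a second edge
  have hdeg : ∀ v ∈ e0, ∃ g, g ∈ H.edges ∧ v ∈ g ∧ g ≠ e0 := by
    intro v hv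
    have h1 : e0 ∈ H.edges.filter (fun e => v ∈ e) := Finset.mem_filter.mpr ⟨he0, hv⟩
    have h3 : 1 < (H.edges.filter (fun e => v ∈ e)).card := by
      have h2 := hno v hv
      have h4 : H.degree v = (H.edges.filter (fun e => v ∈ e)).card := rfl
      have h5 : 0 < (H.edges.filter (fun e => v ∈ e)).card := Finset.card_pos.mpr ⟨e0, h1⟩
      omega
    obtain ⟨g, hg, hne⟩ := Finset.exists_mem_ne h3 e0
    exact ⟨g, (Finset.mem_filter.mp hg).1, (Finset.mem_filter.mp hg).2, hne⟩
  choose! f hf_mem hf_v hf_ne using hdeg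
  set F : Finset (Finset V) := e0.image f with hF_def
  have hFmem : ∀ g ∈ F, g ∈ H.edges := by
    intro g hg; rw [hF_def] at hg
    obtain ⟨v, hv, rfl⟩ := Finset.mem_image.mp hg; exact hf_mem v hv
  have hFne : ∀ g ∈ F, g ≠ e0 := by
    intro g hg; rw [hF_def] at hg
    obtain ⟨v, hv, rfl⟩ := Finset.mem_image.mp hg; exact hf_ne v hv
  have hFinter : ∀ g ∈ F, (g ∩ e0).Nonempty := by
    intro g hg; rw [hF_def] at hg
    obtain ⟨v, hv, rfl⟩ := Finset.mem_image.mp hg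
    exact ⟨v, Finset.mem_inter.mpr ⟨hf_v v hv, hv⟩⟩
  have he0F : e0 ∉ F := fun h => hFne e0 h rfl
  set B : Finset V := F.biUnion id with hB_def
  -- the test vector
  set y : V → ℝ := fun v => if v ∈ e0 then lam else if v ∈ B then 1 else 0 with hy_def
  have hynn : ∀ v, 0 ≤ y v := by
    intro v; rw [hy_def]; dsimp only
    split_ifs <;> [linarith; norm_num; norm_num]
  have he0card : e0.card = r := huni e0 he0
  have he0ne : e0.Nonempty := Finset.card_pos.mp (by omega)
  obtain ⟨v₀, hv₀⟩ := he0ne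
  have hmemVS : ∀ {w : V} {e : Finset V}, e ∈ H.edges → w ∈ e → w ∈ H.vertexSet := by
    intro w e he hw
    exact Finset.mem_biUnion.mpr ⟨e, he, hw⟩
  set k : Finset V → ℕ := fun g => (g ∩ e0).card with hk_def
  set K : ℕ := ∑ g ∈ F, k g with hK_def
  set m : ℕ := F.card with hm_def
  -- products along chosen edges
  have hprod_e0 : ∏ v ∈ e0, y v = a := by
    have h : ∏ v ∈ e0, y v = ∏ _v ∈ e0, lam :=
      Finset.prod_congr rfl (fun v hv => by rw [hy_def]; simp [hv])
    rw [h, Finset.prod_const, he0card, hlampow]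
  have hprod_F : ∀ g ∈ F, ∏ v ∈ g, y v = lam ^ (k g) := by
    intro g hg
    have hsplit : (g \ e0) ∪ (g ∩ e0) = g := Finset.sdiff_union_inter g e0
    have hmain : ∏ v ∈ (g \ e0) ∪ (g ∩ e0), y v = lam ^ (k g) := by
      rw [Finset.prod_union (Finset.disjoint_sdiff_inter g e0)]
      have h1 : ∏ v ∈ g \ e0, y v = 1 := by
        apply Finset.prod_eq_one
        intro v hv
        have hv1 := (Finset.mem_sdiff.mp hv).1
        have hv2 := (Finset.mem_sdiff.mp hv).2
        have hvB : v ∈ B := Finset.mem_biUnion.mpr ⟨g, hg, hv1⟩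
        rw [hy_def]; simp [hv2, hvB]
      have h2 : ∏ v ∈ g ∩ e0, y v = lam ^ (k g) := by
        have h : ∏ v ∈ g ∩ e0, y v = ∏ _v ∈ g ∩ e0, lam :=
          Finset.prod_congr rfl (fun v hv => by rw [hy_def]; simp [(Finset.mem_inter.mp hv).2])
        rw [h, Finset.prod_const, hk_def]
      rw [h1, h2, one_mul]
    rw [hsplit] at hmain
    exact hmain
  set N : ℝ := ∑ e ∈ H.edges, ∏ v ∈ e, y v with hN_def
  have hNge : a + ∑ g ∈ F, lam ^ (k g) ≤ N := by
    have hsub : insert e0 F ⊆ H.edges := by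
      intro e he
      rcases Finset.mem_insert.mp he with rfl | h
      · exact he0
      · exact hFmem e h
    have h1 : ∑ e ∈ insert e0 F, ∏ v ∈ e, y v ≤ N :=
      Finset.sum_le_sum_of_subset_of_nonneg hsub
        (fun e _ _ => Finset.prod_nonneg fun v _ => hynn v)
    rw [Finset.sum_insert he0F, hprod_e0] at h1
    calc a + ∑ g ∈ F, lam ^ (k g) = a + ∑ g ∈ F, ∏ v ∈ g, y v := by
          rw [Finset.sum_congr rfl (fun g hg => (hprod_F g hg).symm)]
      _ ≤ N := h1
  set D : ℝ := ∑ v ∈ H.vertexSet, y v ^ r with hD_def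
  have hDeq : D = (r:ℝ) * a + ((B \ e0).card : ℝ) := by
    have hsub : e0 ∪ B ⊆ H.vertexSet := by
      intro v hv
      rcases Finset.mem_union.mp hv with h | h
      · exact hmemVS he0 h
      · obtain ⟨g, hg, hvg⟩ := Finset.mem_biUnion.mp h
        exact hmemVS (hFmem g hg) hvg
    have h0 : D = ∑ v ∈ e0 ∪ B, y v ^ r := by
      rw [hD_def]
      refine (Finset.sum_subset hsub ?_).symm
      intro v hv hvn
      have h1 : v ∉ e0 := fun h => hvn (Finset.mem_union_left _ h)
      have h2 : v ∉ B := fun h => hvn (Finset.mem_union_right _ h)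
      have h3 : y v = 0 := by rw [hy_def]; simp [h1, h2]
      rw [h3]
      exact zero_pow hr0.ne'
    rw [h0, ← Finset.union_sdiff_self_eq_union,
      Finset.sum_union Finset.disjoint_sdiff]
    have h1 : ∑ v ∈ e0, y v ^ r = (r:ℝ) * a := by
      have h : ∑ v ∈ e0, y v ^ r = ∑ _v ∈ e0, a :=
        Finset.sum_congr rfl (fun v hv => by rw [hy_def]; simp [hv]; exact hlampow)
      rw [h, Finset.sum_const, he0card, nsmul_eq_mul]
    have h2 : ∑ v ∈ B \ e0, y v ^ r = ((B \ e0).card : ℝ) := by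
      have h : ∑ v ∈ B \ e0, y v ^ r = ∑ _v ∈ B \ e0, (1:ℝ) :=
        Finset.sum_congr rfl (fun v hv => by
          have hv1 := (Finset.mem_sdiff.mp hv).1
          have hv2 := (Finset.mem_sdiff.mp hv).2
          rw [hy_def]; simp [hv1, hv2])
      rw [h, Finset.sum_const, nsmul_eq_mul, mul_one]
    rw [h1, h2]
  -- cardinality facts
  have hsum_card : ∑ g ∈ F, ((g \ e0).card + k g) = m * r := by
    have h : ∀ g ∈ F, (g \ e0).card + k g = r := by
      intro g hg
      rw [hk_def]
      have := Finset.card_sdiff_add_card_inter g e0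
      rw [huni g (hFmem g hg)] at this
      exact this
    rw [Finset.sum_congr rfl h, Finset.sum_const, smul_eq_mul]
  have hBcard : (B \ e0).card + K ≤ m * r := by
    have h1 : (B \ e0).card ≤ ∑ g ∈ F, (g \ e0).card := by
      have h : B \ e0 = F.biUnion (fun g => g \ e0) := by
        ext v
        simp only [hB_def, Finset.mem_biUnion, Finset.mem_sdiff, id]
        tauto
      rw [h]; exact Finset.card_biUnion_le
    have h2 : ∑ g ∈ F, (g \ e0).card + K = m * r := by
      rw [hK_def, ← Finset.sum_add_distrib]; exact hsum_card
    calc (B \ e0).card + K ≤ ∑ g ∈ F, (g \ e0).card + K := Nat.add_le_add_right h1 K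
      _ = m * r := h2
  have hKr : r ≤ K := by
    have hsub : e0 ⊆ F.biUnion (fun g => g ∩ e0) := by
      intro v hv
      refine Finset.mem_biUnion.mpr ⟨f v, ?_, Finset.mem_inter.mpr ⟨hf_v v hv, hv⟩⟩
      rw [hF_def]; exact Finset.mem_image_of_mem f hv
    calc r = e0.card := he0card.symm
      _ ≤ (F.biUnion fun g => g ∩ e0).card := Finset.card_le_card hsub
      _ ≤ ∑ g ∈ F, (g ∩ e0).card := Finset.card_biUnion_le
      _ = K := rfl
  have hmK : m ≤ K := by
    rw [hm_def, hK_def]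
    rw [Finset.card_eq_sum_ones]
    exact Finset.sum_le_sum (fun g hg => Finset.card_pos.mpr (hFinter g hg))
  -- Bernoulli bound
  have hNge2 : a + (m : ℝ) + (K : ℝ) * (lam - 1) ≤ N := by
    have hb : ∀ g ∈ F, 1 + (k g : ℝ) * (lam - 1) ≤ lam ^ (k g) := by
      intro g _
      have h := one_add_mul_le_pow (a := lam - 1) (by linarith) (k g)
      have h2 : (1 + (lam - 1)) = lam := by ring
      rw [h2] at h
      exact h
    have h1 : (m:ℝ) + (K:ℝ) * (lam - 1) ≤ ∑ g ∈ F, lam ^ (k g) := by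
      have heq : (m:ℝ) + (K:ℝ) * (lam - 1) = ∑ g ∈ F, (1 + (k g : ℝ) * (lam - 1)) := by
        rw [Finset.sum_add_distrib, Finset.sum_const, nsmul_eq_mul, mul_one,
          ← Finset.sum_mul]
        rw [hm_def, hK_def]
        push_cast
        ring
      rw [heq]
      exact Finset.sum_le_sum hb
    linarith [hNge]
  have hDle : D ≤ (r:ℝ) * a + ((m:ℝ) * (r:ℝ) - (K:ℝ)) := by
    rw [hDeq]
    have h := hBcard
    have h2 : ((B \ e0).card : ℝ) + (K:ℝ) ≤ (m:ℝ) * (r:ℝ) := by exact_mod_cast h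
    linarith
  have hDpos : 0 < D := by
    rw [hDeq]
    have : (0:ℝ) ≤ ((B \ e0).card : ℝ) := Nat.cast_nonneg _
    nlinarith
  -- the main inequality
  have hmain : lam * D < (r:ℝ) * N := by
    have hKm : (m:ℝ) ≤ (K:ℝ) := by exact_mod_cast hmK
    have hKr' : (r:ℝ) ≤ (K:ℝ) := by exact_mod_cast hKr
    have h1 : (0:ℝ) ≤ (r:ℝ) * (lam - 1) * ((K:ℝ) - (m:ℝ)) := by
      apply mul_nonneg (mul_nonneg hrR.le (by linarith)) (by linarith)
    have h2 : (0:ℝ) ≤ lam * ((K:ℝ) - (r:ℝ)) := mul_nonneg hlam0.le (by linarith)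
    have h3 : (0:ℝ) < (r:ℝ) * (a - lam * (a-1)) := mul_pos hrR (by linarith)
    have hD' : lam * D ≤ lam * ((r:ℝ) * a + ((m:ℝ) * (r:ℝ) - (K:ℝ))) :=
      mul_le_mul_of_nonneg_left hDle hlam0.le
    have hN' : (r:ℝ) * (a + (m:ℝ) + (K:ℝ) * (lam - 1)) ≤ (r:ℝ) * N :=
      mul_le_mul_of_nonneg_left hNge2 hrR.le
    linarith [h1, h2, h3, hD', hN']
  -- conclude via the sSup
  have hy0ne : y v₀ ≠ 0 := by
    rw [hy_def]; simp [hv₀]; linarith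
  have hρ : (Nat.factorial r : ℝ) * (N / D) ≤ H.spectralRadius r := by
    rw [Hypergraph'.spectralRadius]
    refine mul_le_mul_of_nonneg_left ?_ (by positivity)
    refine le_csSup (bddAbove_spec H hr0 huni) ?_
    exact ⟨y, hynn, ⟨v₀, hmemVS he0 hv₀, hy0ne⟩, by rw [hN_def, hD_def]⟩
  have hfact : (Nat.factorial r : ℝ) = (r:ℝ) * (Nat.factorial (r-1) : ℝ) := by
    have h := Nat.mul_factorial_pred hr0.ne'
    exact_mod_cast h.symm
  have hfin : (Nat.factorial (r-1):ℝ) * lam < (Nat.factorial r : ℝ) * (N / D) := by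
    rw [hfact, mul_comm (r:ℝ) ((Nat.factorial (r-1):ℝ)), mul_assoc]
    have hfp : (0:ℝ) < (Nat.factorial (r-1):ℝ) := by positivity
    apply mul_lt_mul_of_pos_left ?_ hfp
    rw [mul_div_assoc'] at *
    rw [lt_div_iff₀ hDpos]
    linarith [hmain]
  linarith [hrho, hρ, hfin]
end

section
/- For every positive integer n and every real β ∈ (0,1/4), there exists a unique x in the open interval ((1−√(1−4β))/2, (1+√(1−4β))/2) such that f_β^n(x) = 1 − x, where f_β(x) = β/(1−x) and f_β^n is the n-fold iterate of f_β. -/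
open Finset

/-- **Lemma (unique fixed point of `f_β^n(x) = 1 − x`).**  For every `n ≥ 1` and
`β ∈ (0,1/4)` there is a unique `x ∈ ((1−√(1−4β))/2, (1+√(1−4β))/2)` with
`f_β^n(x) = 1 − x`. -/
theorem existsUnique_iterate_eq_one_sub (n : ℕ) (hn : 1 ≤ n) (β : ℝ)
    (hβ : β ∈ Set.Ioo (0 : ℝ) (1 / 4)) :
    ∃! x : ℝ,
      x ∈ Set.Ioo ((1 - Real.sqrt (1 - 4 * β)) / 2) ((1 + Real.sqrt (1 - 4 * β)) / 2) ∧
        (fun y : ℝ => β / (1 - y))^[n] x = 1 - x := by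
  obtain ⟨hβ0, hβ4⟩ := hβ
  set s : ℝ := Real.sqrt (1 - 4 * β) with hs
  have h14 : (0:ℝ) < 1 - 4 * β := by linarith
  have hs0 : 0 < s := Real.sqrt_pos.mpr h14
  have hs2 : s ^ 2 = 1 - 4 * β := Real.sq_sqrt h14.le
  have hs1 : s < 1 := by
    nlinarith [hs2, hs0]
  set a : ℝ := (1 - s) / 2 with ha
  set b : ℝ := (1 + s) / 2 with hb
  set F : ℝ → ℝ := fun y : ℝ => β / (1 - y) with hF
  have ha0 : 0 < a := by rw [ha]; linarith
  have hab : a < b := by rw [ha, hb]; linarith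
  have hb1 : b < 1 := by rw [hb]; linarith
  have habsum : a + b = 1 := by rw [ha, hb]; ring
  have habprod : a * b = β := by rw [ha, hb]; nlinarith [hs2]
  have hFa : F a = a := by
    rw [hF]
    have : 1 - a = b := by linarith
    simp only [this]
    field_simp
    rw [div_eq_iff (by linarith)]
    linarith [habprod]
  have hFb : F b = b := by
    rw [hF]
    have : 1 - b = a := by linarith
    simp only [this]
    field_simp
    nlinarith [habprod]
  -- F is strictly monotone on [a,b]
  have hmono : StrictMonoOn F (Set.Icc a b) := by
    intro x hx y hy hxy
    have hx1 : x < 1 := lt_of_le_of_lt hx.2 hb1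
    have hy1 : y < 1 := lt_of_le_of_lt hy.2 hb1
    exact div_lt_div_of_pos_left hβ0 (by linarith) (by linarith)
  have hmaps : Set.MapsTo F (Set.Icc a b) (Set.Icc a b) := by
    intro x hx
    constructor
    · rcases eq_or_lt_of_le hx.1 with h | h
      · rw [← h, hFa]
      · rw [← hFa]
        exact le_of_lt (hmono (Set.left_mem_Icc.mpr hab.le) hx h)
    · rcases eq_or_lt_of_le hx.2 with h | h
      · rw [h, hFb]
      · rw [← hFb]
        exact le_of_lt (hmono hx (Set.right_mem_Icc.mpr hab.le) h)
  have hcont : ContinuousOn F (Set.Icc a b) := by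
    apply ContinuousOn.div continuousOn_const (by fun_prop)
    intro x hx
    have : x < 1 := lt_of_le_of_lt hx.2 hb1
    intro h; linarith [h]
  -- iterate properties
  have hiter : ∀ m : ℕ, Set.MapsTo F^[m] (Set.Icc a b) (Set.Icc a b) ∧
      StrictMonoOn F^[m] (Set.Icc a b) ∧ ContinuousOn F^[m] (Set.Icc a b) := by
    intro m
    induction m with
    | zero => simpa using ⟨Set.mapsTo_id _, strictMonoOn_id, continuousOn_id⟩
    | succ k ih =>
      obtain ⟨ihm, ihs, ihc⟩ := ih
      rw [Function.iterate_succ']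
      exact ⟨hmaps.comp ihm, hmono.comp ihs ihm, hcont.comp ihc ihm⟩
  obtain ⟨hmapsN, hmonoN, hcontN⟩ := hiter n
  have hfa : F^[n] a = a := Function.iterate_fixed hFa n
  have hfb : F^[n] b = b := Function.iterate_fixed hFb n
  set g : ℝ → ℝ := fun x => F^[n] x + x with hg
  have hgmono : StrictMonoOn g (Set.Icc a b) := by
    intro x hx y hy hxy
    exact add_lt_add (hmonoN hx hy hxy) hxy
  have hgcont : ContinuousOn g (Set.Icc a b) := hcontN.add continuousOn_id
  have hga : g a = 2 * a := by simp [hg, hfa]; ring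
  have hgb : g b = 2 * b := by simp [hg, hfb]; ring
  have h2a : 2 * a < 1 := by rw [ha]; linarith
  have h2b : 1 < 2 * b := by rw [hb]; linarith
  have hivt := intermediate_value_Icc hab.le hgcont
  have h1mem : (1:ℝ) ∈ Set.Icc (g a) (g b) := by
    rw [hga, hgb]; exact ⟨h2a.le, h2b.le⟩
  obtain ⟨x, hx, hgx⟩ := hivt h1mem
  have hxa : x ≠ a := by
    intro h; rw [h, hga] at hgx; linarith
  have hxb : x ≠ b := by
    intro h; rw [h, hgb] at hgx; linarith
  have hxIoo : x ∈ Set.Ioo a b :=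
    ⟨lt_of_le_of_ne hx.1 (Ne.symm hxa), lt_of_le_of_ne hx.2 hxb⟩
  refine ⟨x, ⟨hxIoo, by have := hgx; simp only [hg] at this; linarith⟩, ?_⟩
  rintro y ⟨hyIoo, hy⟩
  have hyIcc : y ∈ Set.Icc a b := Set.Ioo_subset_Icc_self hyIoo
  have hgy : g y = 1 := by simp only [hg]; rw [hy]; ring
  exact hgmono.injOn hyIcc hx (by rw [hgy, hgx])
end

section
/- For positive integers m, n, k, let F^{(3)}_{m,n,k} be the 3-uniform hypertree consisting of one edge e_0 = {a,b,c} together with three loose paths of lengths m, n and k attached at a, b and c respectively (the three paths start at a, b, c and are otherwise pairwise disjoint and disjoint from e_0). Then lim_{m,n,k→∞} ρ(F^{(3)}_{m,n,k}) = 2·(2+√5)^{1/3}. -/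
open Finset

/-- A hypergraph on vertex type `V`, given by its finite set of edges. -/
structure FinsetHypergraph (V : Type) [DecidableEq V] where
  edges : Finset (Finset V)

namespace FinsetHypergraph

variable {V : Type} [DecidableEq V]

/-- The vertex set of `H`: all vertices lying in some edge. -/
def vertexSet (H : FinsetHypergraph V) : Finset V := H.edges.biUnion id

/-- `H` is `r`-uniform: every edge has exactly `r` vertices. -/
def IsUniform (H : FinsetHypergraph V) (r : ℕ) : Prop := ∀ e ∈ H.edges, e.card = r

/-- The degree of a vertex: the number of edges containing it. -/
def degree (H : FinsetHypergraph V) (v : V) : ℕ := (H.edges.filter fun e => v ∈ e).card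

/-- The spectral radius of an `r`-uniform hypergraph `H`:
`ρ(H) = r! · max{ (∑_{e ∈ E} ∏_{v ∈ e} x_v) / (∑_v x_v ^ r) : x ≥ 0, x ≠ 0 }`. -/
noncomputable def spectralRadius (H : FinsetHypergraph V) (r : ℕ) : ℝ :=
  (Nat.factorial r : ℝ) *
    sSup {t : ℝ | ∃ x : V → ℝ, (∀ v, 0 ≤ x v) ∧ (∃ v ∈ H.vertexSet, x v ≠ 0) ∧
      t = (∑ e ∈ H.edges, ∏ v ∈ e, x v) / (∑ v ∈ H.vertexSet, x v ^ r)}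

/-- `v, e` form a walk `v 0, e 0, v 1, e 1, …, e (l-1), v l` in `H`. -/
def IsWalkSeq (H : FinsetHypergraph V) {l : ℕ} (v : Fin (l + 1) → V) (e : Fin l → Finset V) : Prop :=
  ∀ i : Fin l, e i ∈ H.edges ∧ v i.castSucc ∈ e i ∧ v i.succ ∈ e i

/-- `H` is connected: every two vertices are joined by a walk. -/
def Connected (H : FinsetHypergraph V) : Prop :=
  ∀ u ∈ H.vertexSet, ∀ w ∈ H.vertexSet,
    ∃ (l : ℕ) (v : Fin (l + 1) → V) (e : Fin l → Finset V),
      H.IsWalkSeq v e ∧ v 0 = u ∧ v (Fin.last l) = w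

/-- The cyclic successor on `Fin l`. -/
def cyc {l : ℕ} (i : Fin l) : Fin l := ⟨((i : ℕ) + 1) % l, Nat.mod_lt _ i.pos⟩

/-- `v, e` form a cycle `v 0, e 0, v 1, e 1, …, e (l-1), v 0` of length `l` in `H`,
with all vertices and all edges distinct. -/
def IsCycleSeq (H : FinsetHypergraph V) {l : ℕ} (v : Fin l → V) (e : Fin l → Finset V) : Prop :=
  Function.Injective v ∧ Function.Injective e ∧
    ∀ i : Fin l, e i ∈ H.edges ∧ v i ∈ e i ∧ v (cyc i) ∈ e i

/-- `H` contains a cycle. -/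
def HasCycle (H : FinsetHypergraph V) : Prop :=
  ∃ l : ℕ, 2 ≤ l ∧ ∃ (v : Fin l → V) (e : Fin l → Finset V), H.IsCycleSeq v e

/-- A hypertree: connected and acyclic. -/
def IsHypertree (H : FinsetHypergraph V) : Prop := H.Connected ∧ ¬H.HasCycle

/-- `H` is irreducible: some edge has all of its vertices of degree at least `2`. -/
def Irreducible (H : FinsetHypergraph V) : Prop := ∃ e ∈ H.edges, ∀ v ∈ e, 2 ≤ H.degree v

/-- `g` encodes a loose path: consecutive edges meet in exactly one vertex and
non-consecutive edges are disjoint. -/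
def IsLoosePathSeq {m : ℕ} (g : Fin m → Finset V) : Prop :=
  (∀ i j : Fin m, (i : ℕ) + 1 = (j : ℕ) → (g i ∩ g j).card = 1) ∧
    ∀ i j : Fin m, (i : ℕ) + 1 < (j : ℕ) → g i ∩ g j = ∅

/-- The set of vertices covered by a family of edges. -/
def pathVerts {m : ℕ} (g : Fin m → Finset V) : Finset V := Finset.univ.biUnion g

/-- A loose path of edges of `H`, attached to the edge `e0` at the vertex `a`:
`a` is an end vertex of the first edge of the path, and the path meets `e0` only in `a`. -/
def IsAttachedPath (H : FinsetHypergraph V) (e0 : Finset V) (a : V) {m : ℕ}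
    (g : Fin m → Finset V) : Prop :=
  IsLoosePathSeq g ∧ (∀ j, g j ∈ H.edges) ∧ (∀ j, g j ≠ e0) ∧
    pathVerts g ∩ e0 = {a} ∧ ∀ j : Fin m, a ∈ g j ↔ (j : ℕ) = 0

/-- A path in `H`: a walk with all vertices and all edges distinct. -/
def IsPathSeq (H : FinsetHypergraph V) {l : ℕ} (v : Fin (l + 1) → V) (e : Fin l → Finset V) : Prop :=
  H.IsWalkSeq v e ∧ Function.Injective v ∧ Function.Injective e

/-- `F^{(3)}_{m,n,k}`: the 3-uniform hypertree consisting of one central edge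
`{a 0, a 1, a 2}` together with three loose paths of lengths `m`, `n`, `k` attached at
`a 0`, `a 1`, `a 2` respectively, the paths otherwise pairwise disjoint. -/
def IsF3 (H : FinsetHypergraph V) (m n k : ℕ) : Prop :=
  H.IsUniform 3 ∧
    ∃ (a : Fin 3 → V) (p : Fin m → Finset V) (q : Fin n → Finset V) (s : Fin k → Finset V),
      Function.Injective a ∧ Finset.univ.image a ∈ H.edges ∧
      H.IsAttachedPath (Finset.univ.image a) (a 0) p ∧
      H.IsAttachedPath (Finset.univ.image a) (a 1) q ∧
      H.IsAttachedPath (Finset.univ.image a) (a 2) s ∧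
      pathVerts p ∩ pathVerts q = ∅ ∧ pathVerts p ∩ pathVerts s = ∅ ∧
      pathVerts q ∩ pathVerts s = ∅ ∧
      ∀ f ∈ H.edges, f = Finset.univ.image a ∨ (∃ i, p i = f) ∨ (∃ i, q i = f) ∨ ∃ i, s i = f

end FinsetHypergraph

open FinsetHypergraph

open Finset

noncomputable def phiR : ℝ := (1 + Real.sqrt 5) / 2
noncomputable def gg : ℝ := phiR ^ (-(1/3) : ℝ)

lemma sqrt5_sq : Real.sqrt 5 ^ 2 = 5 := Real.sq_sqrt (by norm_num)
lemma sqrt5_pos : 0 < Real.sqrt 5 := Real.sqrt_pos.mpr (by norm_num)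
lemma sqrt5_lt : Real.sqrt 5 < 3 := by
  nlinarith [sqrt5_sq, sqrt5_pos]
lemma one_lt_sqrt5 : 1 < Real.sqrt 5 := by nlinarith [sqrt5_sq, sqrt5_pos]

lemma one_lt_phi : 1 < phiR := by unfold phiR; nlinarith [one_lt_sqrt5]
lemma phi_pos : 0 < phiR := lt_trans one_pos one_lt_phi

lemma gg_pos : 0 < gg := Real.rpow_pos_of_pos phi_pos _
lemma gg_lt_one : gg < 1 :=
  Real.rpow_lt_one_of_one_lt_of_neg one_lt_phi (by norm_num)
lemma gg_le_one : gg ≤ 1 := le_of_lt gg_lt_one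

lemma gg_cube : gg ^ (3:ℕ) = phiR⁻¹ := by
  unfold gg
  rw [← Real.rpow_natCast (phiR ^ (-(1/3):ℝ)) 3, ← Real.rpow_mul (le_of_lt phi_pos)]
  norm_num
  rw [Real.rpow_neg_one]

lemma gg_rel : gg ^ (3:ℕ) + gg ^ (6:ℕ) = 1 := by
  have h6 : gg ^ (6:ℕ) = (gg ^ (3:ℕ))^2 := by ring
  rw [gg_cube] at *
  rw [h6]
  have hp := phi_pos
  have hne : phiR ≠ 0 := ne_of_gt hp
  have h2 : phiR ^ 2 = phiR + 1 := by
    unfold phiR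
    linear_combination (1/4 : ℝ) * sqrt5_sq
  field_simp
  linear_combination (-1 : ℝ) * h2

lemma gg_inv_cube : (gg ^ (3:ℕ))⁻¹ = phiR := by rw [gg_cube, inv_inv]

lemma target_const : 2 * (2 + Real.sqrt 5) ^ ((1:ℝ)/3) = 2 * phiR := by
  have h : phiR ^ (3:ℕ) = 2 + Real.sqrt 5 := by
    unfold phiR
    linear_combination ((Real.sqrt 5 + 3)/8) * sqrt5_sq
  have h0 : (0:ℝ) ≤ phiR := le_of_lt phi_pos
  have := Real.pow_rpow_inv_natCast h0 (n := 3) (by norm_num)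
  rw [← h, show ((1:ℝ)/3) = (((3:ℕ):ℝ))⁻¹ by norm_num, this]
noncomputable def pweight (P : ℕ → Finset ℕ) (v : ℕ) : ℕ :=
  letI := Classical.propDecidable (∃ i, v ∈ P i ∧ v ∈ P (i+1))
  if ∃ i, v ∈ P i ∧ v ∈ P (i+1) then sInf {i | v ∈ P i} + 1 else sInf {i | v ∈ P i} + 2

noncomputable def SvF (Ed : Finset (Finset ℕ)) (x : ℕ → ℝ) (v : ℕ) : ℝ :=
  ∑ f ∈ Ed.filter (fun f => v ∈ f), ∏ u ∈ f.erase v, x u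

lemma sInf_eq_of {Pp : ℕ → Prop} {t : ℕ} (ht : Pp t) (hmin : ∀ j, Pp j → t ≤ j) :
    sInf {i | Pp i} = t :=
  le_antisymm (Nat.sInf_le ht) (hmin _ (Nat.sInf_mem ⟨t, ht⟩))

lemma pweight_joint {P : ℕ → Finset ℕ} {v t : ℕ} (h : ∃ i, v ∈ P i ∧ v ∈ P (i+1))
    (ht : v ∈ P t) (hmin : ∀ j, v ∈ P j → t ≤ j) : pweight P v = t + 1 := by
  unfold pweight
  rw [if_pos h, sInf_eq_of (Pp := fun i => v ∈ P i) ht hmin]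

lemma pweight_single {P : ℕ → Finset ℕ} {v t : ℕ} (h : ¬ ∃ i, v ∈ P i ∧ v ∈ P (i+1))
    (ht : v ∈ P t) (hmin : ∀ j, v ∈ P j → t ≤ j) : pweight P v = t + 2 := by
  unfold pweight
  rw [if_neg h, sInf_eq_of (Pp := fun i => v ∈ P i) ht hmin]

lemma erase3a (x : ℕ → ℝ) {A B C : ℕ} (hAB : A ≠ B) (hAC : A ≠ C) (hBC : B ≠ C) :
    ∏ u ∈ (insert A (insert B {C}) : Finset ℕ).erase A, x u = x B * x C := by
  rw [Finset.erase_insert (by simp [hAB, hAC])]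
  exact Finset.prod_pair hBC

lemma erase3b (x : ℕ → ℝ) {A B C : ℕ} (hAB : A ≠ B) (hAC : A ≠ C) (hBC : B ≠ C) :
    ∏ u ∈ (insert A (insert B {C}) : Finset ℕ).erase B, x u = x A * x C := by
  have h : (insert A (insert B {C}) : Finset ℕ).erase B = insert A {C} := by
    ext z
    by_cases hz : z = A <;> by_cases hz2 : z = B <;> by_cases hz3 : z = C <;> simp_all
  rw [h, Finset.prod_insert (by simp [hAC]), Finset.prod_singleton]

lemma erase3c (x : ℕ → ℝ) {A B C : ℕ} (hAB : A ≠ B) (hAC : A ≠ C) (hBC : B ≠ C) :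
    ∏ u ∈ (insert A (insert B {C}) : Finset ℕ).erase C, x u = x A * x B := by
  have h : (insert A (insert B {C}) : Finset ℕ).erase C = insert A {B} := by
    ext z
    by_cases hz : z = A <;> by_cases hz2 : z = B <;> by_cases hz3 : z = C <;> simp_all
  rw [h, Finset.prod_insert (by simp [hAB]), Finset.prod_singleton]

lemma gg_pow_le {a b : ℕ} (h : a ≤ b) : gg ^ b ≤ gg ^ a :=
  pow_le_pow_of_le_one (le_of_lt gg_pos) gg_le_one h

lemma gg_ne : gg ≠ 0 := ne_of_gt gg_pos

lemma ginv_mul (e : ℕ) : (gg ^ (3:ℕ))⁻¹ * gg ^ (e + 3) = gg ^ e := by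
  rw [pow_add, mul_comm (gg ^ e), ← mul_assoc, inv_mul_cancel₀ (pow_ne_zero _ gg_ne), one_mul]
lemma pow_mul_pow (a b c : ℕ) (h : a + b = c) : gg ^ a * gg ^ b = gg ^ c := by
  rw [← pow_add, h]
lemma pow_pow2 (a c : ℕ) (h : a * 2 = c) : (gg ^ a) ^ 2 = gg ^ c := by rw [← pow_mul, h]
lemma pow_pow3 (a c : ℕ) (h : a * 3 = c) : (gg ^ a) ^ 3 = gg ^ c := by rw [← pow_mul, h]
lemma Gpow (c e : ℕ) (h : 3 * c = e) : (gg ^ (3:ℕ)) ^ c = gg ^ e := by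
  rw [← pow_mul, h]
lemma ginv_mul' (a b : ℕ) (h : a = b + 3) : (gg ^ (3:ℕ))⁻¹ * gg ^ a = gg ^ b := by
  rw [h]; exact ginv_mul b
lemma gpow_nonneg (a : ℕ) : 0 ≤ gg ^ a := le_of_lt (pow_pos gg_pos a)

lemma split_pow (e : ℕ) : gg ^ e = gg ^ (e+3) + gg ^ (e+6) := by
  calc gg ^ e = gg ^ e * (gg ^ (3:ℕ) + gg ^ (6:ℕ)) := by rw [gg_rel, mul_one]
  _ = gg ^ (e+3) + gg ^ (e+6) := by rw [mul_add, ← pow_add, ← pow_add]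

lemma inv_split (e : ℕ) : (gg ^ (3:ℕ))⁻¹ * gg ^ e = gg ^ e + gg ^ (e+3) := by
  calc (gg ^ (3:ℕ))⁻¹ * gg ^ e = (gg ^ (3:ℕ))⁻¹ * (gg ^ (e+3) + gg ^ (e+6)) := by
        rw [← split_pow]
  _ = gg ^ e + gg ^ (e+3) := by
        rw [mul_add, ginv_mul' (e+3) e rfl, ginv_mul' (e+6) (e+3) rfl]
lemma path_lemma (Ed : Finset (Finset ℕ)) (E0 : Finset ℕ) (m : ℕ) (hm : 1 ≤ m)
    (P : ℕ → Finset ℕ) (α : ℕ) (x : ℕ → ℝ)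
    (h3 : ∀ i < m, (P i).card = 3)
    (hPout : ∀ i, m ≤ i → P i = ∅)
    (hcons : ∀ i, i + 1 < m → (P i ∩ P (i+1)).card = 1)
    (hfar : ∀ i j, i + 1 < j → P i ∩ P j = ∅)
    (hα : ∀ i < m, (α ∈ P i ↔ i = 0))
    (hVE : ((range m).biUnion P) ∩ E0 = {α})
    (hPmem : ∀ i < m, P i ∈ Ed)
    (honly : ∀ v ∈ (range m).biUnion P, v ∉ E0 → ∀ f ∈ Ed, v ∈ f → ∃ i, i < m ∧ f = P i)
    (hxα : x α = 1)
    (hxval : ∀ v ∈ (range m).biUnion P, v ∉ E0 → x v = gg ^ (pweight P v)) :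
    (∀ v ∈ (range m).biUnion P, v ∉ E0 → SvF Ed x v ≤ (gg ^ (3:ℕ))⁻¹ * (x v)^2) ∧
    (∑ v ∈ ((range m).biUnion P) \ {α},
        ((gg ^ (3:ℕ))⁻¹ * (x v)^3 - x v * SvF Ed x v) ≤ 3 * (gg ^ (3:ℕ))^m) ∧
    (∏ u ∈ (P 0).erase α, x u ≤ gg ^ (3:ℕ)) ∧
    ((gg ^ (3:ℕ))⁻¹ - 1 - ∏ u ∈ (P 0).erase α, x u ≤ (gg ^ (3:ℕ))^m) ∧
    α ∈ P 0 := by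
  classical
  have hmemVP : ∀ v, v ∈ (range m).biUnion P ↔ ∃ i, i < m ∧ v ∈ P i := by
    intro v
    simp [Finset.mem_biUnion, Finset.mem_range]
  have hPlt : ∀ {i v : ℕ}, v ∈ P i → i < m := by
    intro i v hv
    by_contra h
    rw [hPout i (Nat.le_of_not_lt h)] at hv
    exact absurd hv (Finset.notMem_empty v)
  have hconsec : ∀ {v i j : ℕ}, v ∈ P i → v ∈ P j → i < j → j = i + 1 := by
    intro v i j hi hj hij
    by_contra h
    have h2 : i + 1 < j := by omega
    have h4 : v ∈ P i ∩ P j := Finset.mem_inter.mpr ⟨hi, hj⟩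
    rw [hfar i j h2] at h4
    exact absurd h4 (Finset.notMem_empty v)
  have hPne : ∀ i, i < m → (P i).Nonempty := fun i hi =>
    Finset.card_pos.mp (by rw [h3 i hi]; norm_num)
  have hPinj : ∀ {i j}, i < m → j < m → P i = P j → i = j := by
    have key : ∀ {i j}, i < m → j < m → P i = P j → i < j → False := by
      intro i j hi hj hij hlt
      rcases Nat.eq_or_lt_of_le (Nat.succ_le_of_lt hlt) with h2 | h2
      · have hc := hcons i (by omega)
        rw [show i + 1 = j from h2, ← hij, Finset.inter_self, h3 i hi] at hc
        norm_num at hc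
      · have hf := hfar i j h2
        rw [hij, Finset.inter_self] at hf
        obtain ⟨z, hz⟩ := hPne j hj
        rw [hf] at hz
        exact absurd hz (Finset.notMem_empty z)
    intro i j hi hj hij
    rcases lt_trichotomy i j with h | h | h
    · exact absurd (key hi hj hij h) (by simp)
    · exact h
    · exact absurd (key hj hi hij.symm h) (by simp)
  have hαmem : α ∈ (range m).biUnion P ∧ α ∈ E0 := by
    have h1 : α ∈ ((range m).biUnion P) ∩ E0 := by
      rw [hVE]; exact Finset.mem_singleton_self α
    exact ⟨(Finset.mem_inter.mp h1).1, (Finset.mem_inter.mp h1).2⟩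
  have hα0 : α ∈ P 0 := by
    obtain ⟨i, hi, hmem⟩ := (hmemVP α).mp hαmem.1
    rwa [(hα i hi).mp hmem] at hmem
  have hVEmem : ∀ v, v ∈ (range m).biUnion P → v ∈ E0 → v = α := by
    intro v h1 h2
    have h4 : v ∈ ((range m).biUnion P) ∩ E0 := Finset.mem_inter.mpr ⟨h1, h2⟩
    rw [hVE] at h4
    exact Finset.mem_singleton.mp h4
  have hnotE0 : ∀ v, v ∈ (range m).biUnion P → v ≠ α → v ∉ E0 :=
    fun v hv hne hE => hne (hVEmem v hv hE)
  have hαnot : ∀ i, 1 ≤ i → α ∉ P i := by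
    intro i h1 hmem
    have := (hα i (hPlt hmem)).mp hmem
    omega
  -- joints
  have hJex : ∀ t, ∃ z, 1 ≤ t → t < m → P (t-1) ∩ P t = {z} := by
    intro t
    by_cases h : 1 ≤ t ∧ t < m
    · have hc := hcons (t-1) (by omega)
      have ht : t - 1 + 1 = t := by omega
      rw [ht] at hc
      obtain ⟨z, hz⟩ := Finset.card_eq_one.mp hc
      exact ⟨z, fun _ _ => hz⟩
    · exact ⟨0, fun h1 h2 => absurd ⟨h1, h2⟩ h⟩
  choose Jn hJn using hJex
  set Jpre : ℕ → ℕ := fun t => if t = 0 then α else Jn t with hJpredef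
  have hJpre_mem : Jpre (m-1) ∈ P (m-1) := by
    by_cases h : m - 1 = 0
    · have e : Jpre (m-1) = α := by simp [hJpredef, h]
      rw [e, h]; exact hα0
    · have e : Jpre (m-1) = Jn (m-1) := by simp [hJpredef, h]
      rw [e]
      have h5 := hJn (m-1) (by omega) (by omega)
      have h6 : Jn (m-1) ∈ P (m-1-1) ∩ P (m-1) := by
        rw [h5]; exact Finset.mem_singleton_self _
      exact (Finset.mem_inter.mp h6).2
  have h2card : ((P (m-1)).erase (Jpre (m-1))).card = 2 := by
    rw [Finset.card_erase_of_mem hJpre_mem, h3 (m-1) (by omega)]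
  obtain ⟨bb, cc, hbcne, hbc⟩ := Finset.card_eq_two.mp h2card
  set J : ℕ → ℕ := fun t => if t = 0 then α else if t ≤ m - 1 then Jn t else bb with hJdef
  have hJ0 : J 0 = α := by simp [hJdef]
  have hJint : ∀ t, 1 ≤ t → t < m → P (t-1) ∩ P t = {J t} := by
    intro t h1 h2
    have he : J t = Jn t := by
      simp only [hJdef]
      rw [if_neg (by omega : ¬ t = 0), if_pos (by omega : t ≤ m - 1)]
    rw [he]; exact hJn t h1 h2
  have hJm : J m = bb := by
    simp only [hJdef]
    rw [if_neg (by omega : ¬ m = 0), if_neg (by omega : ¬ m ≤ m - 1)]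
  have hJpre_eq : J (m-1) = Jpre (m-1) := by
    by_cases h : m - 1 = 0
    · simp [hJdef, hJpredef, h]
    · simp [hJdef, hJpredef, h]
  have hbberase : bb ∈ (P (m-1)).erase (J (m-1)) := by
    rw [hJpre_eq, hbc]; exact Finset.mem_insert_self _ _
  have hccerase : cc ∈ (P (m-1)).erase (J (m-1)) := by
    rw [hJpre_eq, hbc]; exact Finset.mem_insert_of_mem (Finset.mem_singleton_self _)
  have hJmem2 : ∀ t, t < m → J t ∈ P t := by
    intro t ht
    rcases Nat.eq_zero_or_pos t with rfl | h1
    · rw [hJ0]; exact hα0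
    · have h5 := hJint t h1 ht
      have h6 : J t ∈ P (t-1) ∩ P t := by rw [h5]; exact Finset.mem_singleton_self _
      exact (Finset.mem_inter.mp h6).2
  have hJmem1 : ∀ t, 1 ≤ t → t ≤ m → J t ∈ P (t-1) := by
    intro t h1 h2
    rcases Nat.eq_or_lt_of_le h2 with heq | hlt
    · rw [heq, hJm]
      exact Finset.mem_of_mem_erase hbberase
    · have h5 := hJint t h1 hlt
      have h6 : J t ∈ P (t-1) ∩ P t := by rw [h5]; exact Finset.mem_singleton_self _
      exact (Finset.mem_inter.mp h6).1
  have hJonly : ∀ t i, 1 ≤ t → t ≤ m → J t ∈ P i → (i = t - 1 ∨ (t < m ∧ i = t)) := by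
    intro t i h1 h2 hmem
    have him := hPlt hmem
    rcases Nat.eq_or_lt_of_le h2 with heq | hlt
    · -- t = m
      left
      by_contra hne
      have hilt : i < t - 1 := by omega
      rcases Nat.lt_or_ge (i+1) (t-1) with hc | hc
      · have hf := hfar i (t-1) hc
        have h7 : J t ∈ P i ∩ P (t-1) :=
          Finset.mem_inter.mpr ⟨hmem, hJmem1 t h1 h2⟩
        rw [hf] at h7
        exact absurd h7 (Finset.notMem_empty _)
      · have he : t - 1 = i + 1 := by omega
        have hint := hJint (i+1) (by omega) (by omega)
        have h8 : i + 1 - 1 = i := by omega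
        rw [h8] at hint
        have h7 : J t ∈ P i ∩ P (i+1) := by
          refine Finset.mem_inter.mpr ⟨hmem, ?_⟩
          rw [← he]; exact hJmem1 t h1 h2
        rw [hint] at h7
        have h9 : J t = J (i+1) := Finset.mem_singleton.mp h7
        rw [← he] at h9
        -- J m = J (m-1) : contradiction with bb ∉ {J (m-1)}
        have h10 : bb ≠ J (m-1) := (Finset.mem_erase.mp hbberase).1
        rw [heq, hJm] at h9
        exact h10 h9
    · -- t < m
      have hm1 : J t ∈ P (t-1) := hJmem1 t h1 (le_of_lt hlt)
      have hm2 : J t ∈ P t := hJmem2 t hlt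
      by_contra hcon
      push_neg at hcon
      obtain ⟨hne1, hne2⟩ := hcon
      have hne2' : i ≠ t := hne2 hlt
      rcases lt_trichotomy i (t-1) with hc | hc | hc
      · have hf := hfar i t (by omega)
        have h7 : J t ∈ P i ∩ P t := Finset.mem_inter.mpr ⟨hmem, hm2⟩
        rw [hf] at h7
        exact absurd h7 (Finset.notMem_empty _)
      · exact hne1 hc
      · have hit : t < i := by omega
        have hf := hfar (t-1) i (by omega)
        have h7 : J t ∈ P (t-1) ∩ P i := Finset.mem_inter.mpr ⟨hm1, hmem⟩
        rw [hf] at h7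
        exact absurd h7 (Finset.notMem_empty _)
  have hJne2 : ∀ i, i + 1 < m → (J i ≠ J (i+1) ∧ J i ∈ P i ∧ J (i+1) ∈ P i) := by
    intro i h
    have hJsi : J (i+1) ∈ P i := by
      have h5 := hJmem1 (i+1) (by omega) (by omega)
      have h6 : i + 1 - 1 = i := by omega
      rwa [h6] at h5
    refine ⟨?_, hJmem2 i (by omega), hJsi⟩
    intro heq
    rcases Nat.eq_zero_or_pos i with rfl | h1
    · have hmb : J 1 ∈ P 1 := hJmem2 1 h
      rw [← heq, hJ0] at hmb
      exact hαnot 1 le_rfl hmb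
    · have hma : J i ∈ P (i-1) := hJmem1 i h1 (by omega)
      have hmb : J (i+1) ∈ P (i+1) := hJmem2 (i+1) h
      rw [← heq] at hmb
      have hf := hfar (i-1) (i+1) (by omega)
      have h7 : J i ∈ P (i-1) ∩ P (i+1) := Finset.mem_inter.mpr ⟨hma, hmb⟩
      rw [hf] at h7
      exact absurd h7 (Finset.notMem_empty _)
  have hMidex : ∀ i, ∃ z, i + 1 < m → ((P i).erase (J i)).erase (J (i+1)) = {z} := by
    intro i
    by_cases h : i + 1 < m
    · obtain ⟨hne, hJi, hJsi⟩ := hJne2 i h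
      have hcard : (((P i).erase (J i)).erase (J (i+1))).card = 1 := by
        rw [Finset.card_erase_of_mem (Finset.mem_erase.mpr ⟨Ne.symm hne, hJsi⟩),
          Finset.card_erase_of_mem hJi, h3 i (by omega)]
      obtain ⟨z, hz⟩ := Finset.card_eq_one.mp hcard
      exact ⟨z, fun _ => hz⟩
    · exact ⟨0, fun hh => absurd hh h⟩
  choose Mid0 hMid0 using hMidex
  set Mid : ℕ → ℕ := fun i => if i + 1 < m then Mid0 i else cc with hMiddef
  have hMidlast : Mid (m-1) = cc := by
    simp only [hMiddef]
    rw [if_neg (by omega : ¬ (m - 1 + 1 < m))]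
  have hD1 : ∀ i, i < m →
      (P i = insert (J i) (insert (Mid i) {J (i+1)}) ∧
        J i ≠ Mid i ∧ J i ≠ J (i+1) ∧ Mid i ≠ J (i+1)) := by
    intro i hi
    by_cases h : i + 1 < m
    · obtain ⟨hne, hJi, hJsi⟩ := hJne2 i h
      have hmid := hMid0 i h
      have hMidval : Mid i = Mid0 i := by simp only [hMiddef]; rw [if_pos h]
      have hz1 : Mid0 i ∈ ((P i).erase (J i)).erase (J (i+1)) := by
        rw [hmid]; exact Finset.mem_singleton_self _
      have hzne2 : Mid0 i ≠ J (i+1) := (Finset.mem_erase.mp hz1).1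
      have hz2 : Mid0 i ∈ (P i).erase (J i) := (Finset.mem_erase.mp hz1).2
      have hzne1 : Mid0 i ≠ J i := (Finset.mem_erase.mp hz2).1
      have e1 : insert (J (i+1)) {Mid0 i} = (P i).erase (J i) := by
        rw [← hmid]
        exact Finset.insert_erase (Finset.mem_erase.mpr ⟨Ne.symm hne, hJsi⟩)
      have e2 : insert (J i) ((P i).erase (J i)) = P i := Finset.insert_erase hJi
      refine ⟨?_, ?_, hne, ?_⟩
      · rw [hMidval, ← e2, ← e1, Finset.pair_comm]
      · rw [hMidval]; exact Ne.symm hzne1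
      · rw [hMidval]; exact hzne2
    · have him : i = m - 1 := by omega
      have hJsucc : J (i+1) = bb := by
        have : i + 1 = m := by omega
        rw [this, hJm]
      have hMidval : Mid i = cc := by rw [← him] at hMidlast; exact hMidlast
      have hberase : bb ∈ (P i).erase (J i) := by rw [him]; exact hbberase
      have hcerase : cc ∈ (P i).erase (J i) := by rw [him]; exact hccerase
      have hbci : (P i).erase (J i) = {bb, cc} := by rw [him, hJpre_eq]; exact hbc
      have e2 : insert (J i) ((P i).erase (J i)) = P i :=
        Finset.insert_erase (by rw [him]; rw [hJpre_eq]; exact hJpre_mem)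
      refine ⟨?_, ?_, ?_, ?_⟩
      · rw [hMidval, hJsucc, ← e2, hbci, Finset.pair_comm]
      · rw [hMidval]; exact Ne.symm (Finset.mem_erase.mp hcerase).1
      · rw [hJsucc]; exact Ne.symm (Finset.mem_erase.mp hberase).1
      · rw [hMidval, hJsucc]; exact fun hq => hbcne hq.symm
  have hMidmem : ∀ i, i < m → Mid i ∈ P i := by
    intro i hi
    obtain ⟨hset, _, _, _⟩ := hD1 i hi
    rw [hset]
    exact Finset.mem_insert_of_mem (Finset.mem_insert_self _ _)
  have hMidonly : ∀ i t, i < m → Mid i ∈ P t → t = i := by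
    intro i t hi hmem
    have htm := hPlt hmem
    obtain ⟨_, d1, d2, d3⟩ := hD1 i hi
    by_contra hne
    rcases lt_trichotomy t i with hc | hc | hc
    · rcases Nat.lt_or_ge (t+1) i with hc2 | hc2
      · have hf := hfar t i hc2
        have h7 : Mid i ∈ P t ∩ P i := Finset.mem_inter.mpr ⟨hmem, hMidmem i hi⟩
        rw [hf] at h7; exact absurd h7 (Finset.notMem_empty _)
      · have he : i = t + 1 := by omega
        have hint := hJint i (by omega) hi
        have h7 : Mid i ∈ P (i-1) ∩ P i := by
          refine Finset.mem_inter.mpr ⟨?_, hMidmem i hi⟩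
          rw [show i - 1 = t from by omega]; exact hmem
        rw [hint] at h7
        exact d1 (Finset.mem_singleton.mp h7).symm
    · exact hne hc
    · rcases Nat.lt_or_ge (i+1) t with hc2 | hc2
      · have hf := hfar i t hc2
        have h7 : Mid i ∈ P i ∩ P t := Finset.mem_inter.mpr ⟨hMidmem i hi, hmem⟩
        rw [hf] at h7; exact absurd h7 (Finset.notMem_empty _)
      · have he : t = i + 1 := by omega
        have hint := hJint (i+1) (by omega) (by omega)
        have h8 : i + 1 - 1 = i := by omega
        rw [h8] at hint
        have h7 : Mid i ∈ P i ∩ P (i+1) := by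
          refine Finset.mem_inter.mpr ⟨hMidmem i hi, ?_⟩
          rw [← he]; exact hmem
        rw [hint] at h7
        exact d3 (Finset.mem_singleton.mp h7)
  have hJneα : ∀ t, 1 ≤ t → t ≤ m → J t ≠ α := by
    intro t h1 h2 heq
    rcases Nat.eq_or_lt_of_le h2 with heqm | hlt
    · by_cases hm1 : m = 1
      · have : bb ≠ J (m-1) := (Finset.mem_erase.mp hbberase).1
        rw [show m - 1 = 0 from by omega, hJ0] at this
        rw [heqm, hJm] at heq
        exact this heq
      · have h5 := hJmem1 t h1 h2
        rw [heq] at h5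
        exact hαnot (t-1) (by omega) h5
    · have h5 := hJmem2 t hlt
      rw [heq] at h5
      exact hαnot t h1 h5
  have hMidneα : ∀ i, i < m → Mid i ≠ α := by
    intro i hi heq
    rcases Nat.eq_zero_or_pos i with rfl | h1
    · obtain ⟨_, d1, _, _⟩ := hD1 0 hi
      rw [← hJ0] at heq
      exact d1 heq.symm
    · have h5 := hMidmem i hi
      rw [heq] at h5
      exact hαnot i h1 h5
  -- x values
  have hxJ : ∀ t, t < m → x (J t) = gg ^ t := by
    intro t ht
    rcases Nat.eq_zero_or_pos t with rfl | h1
    · rw [hJ0, hxα, pow_zero]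
    · have hvmem : J t ∈ (range m).biUnion P := (hmemVP _).mpr ⟨t, ht, hJmem2 t ht⟩
      rw [hxval _ hvmem (hnotE0 _ hvmem (hJneα t h1 (le_of_lt ht)))]
      have hjoint : ∃ i, J t ∈ P i ∧ J t ∈ P (i+1) := by
        refine ⟨t-1, hJmem1 t h1 (le_of_lt ht), ?_⟩
        rw [show t - 1 + 1 = t from by omega]
        exact hJmem2 t ht
      have hmin : ∀ j, J t ∈ P j → t - 1 ≤ j := by
        intro j hj
        rcases hJonly t j h1 (le_of_lt ht) hj with h | h <;> omega
      rw [pweight_joint hjoint (hJmem1 t h1 (le_of_lt ht)) hmin]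
      congr 1
      omega
  have hxJm : x (J m) = gg ^ (m + 1) := by
    have hvmem : J m ∈ (range m).biUnion P :=
      (hmemVP _).mpr ⟨m-1, by omega, hJmem1 m hm le_rfl⟩
    rw [hxval _ hvmem (hnotE0 _ hvmem (hJneα m hm le_rfl))]
    have hnj : ¬ ∃ i, J m ∈ P i ∧ J m ∈ P (i+1) := by
      rintro ⟨i, ha, hb⟩
      have e1 := hJonly m i hm le_rfl ha
      have e2 := hJonly m (i+1) hm le_rfl hb
      omega
    have hmin : ∀ j, J m ∈ P j → m - 1 ≤ j := by
      intro j hj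
      rcases hJonly m j hm le_rfl hj with h | h <;> omega
    rw [pweight_single hnj (hJmem1 m hm le_rfl) hmin]
    congr 1
    omega
  have hxMid : ∀ i, i < m → x (Mid i) = gg ^ (i + 2) := by
    intro i hi
    have hvmem : Mid i ∈ (range m).biUnion P := (hmemVP _).mpr ⟨i, hi, hMidmem i hi⟩
    rw [hxval _ hvmem (hnotE0 _ hvmem (hMidneα i hi))]
    have hnj : ¬ ∃ j, Mid i ∈ P j ∧ Mid i ∈ P (j+1) := by
      rintro ⟨j, ha, hb⟩
      have e1 := hMidonly i j hi ha
      have e2 := hMidonly i (j+1) hi hb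
      omega
    have hmin : ∀ j, Mid i ∈ P j → i ≤ j := by
      intro j hj
      rw [hMidonly i j hi hj]
    rw [pweight_single hnj (hMidmem i hi) hmin]
  -- products over erased edges
  have hprodJ : ∀ i, i < m → ∏ u ∈ (P i).erase (J i), x u = x (Mid i) * x (J (i+1)) := by
    intro i hi
    obtain ⟨hset, d1, d2, d3⟩ := hD1 i hi
    rw [hset]
    exact erase3a x d1 d2 d3
  have hprodMid : ∀ i, i < m → ∏ u ∈ (P i).erase (Mid i), x u = x (J i) * x (J (i+1)) := by
    intro i hi
    obtain ⟨hset, d1, d2, d3⟩ := hD1 i hi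
    rw [hset]
    exact erase3b x d1 d2 d3
  have hprodJs : ∀ i, i < m → ∏ u ∈ (P i).erase (J (i+1)), x u = x (J i) * x (Mid i) := by
    intro i hi
    obtain ⟨hset, d1, d2, d3⟩ := hD1 i hi
    rw [hset]
    exact erase3c x d1 d2 d3
  -- Sv computations
  have hfilterP : ∀ v ∈ (range m).biUnion P, v ∉ E0 →
      Ed.filter (fun f => v ∈ f) = ((range m).filter (fun i => v ∈ P i)).image P := by
    intro v hv hvE
    ext f
    simp only [Finset.mem_filter, Finset.mem_image, Finset.mem_range]
    constructor
    · rintro ⟨hf, hvf⟩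
      obtain ⟨i, hi, rfl⟩ := honly v hv hvE f hf hvf
      exact ⟨i, ⟨hi, hvf⟩, rfl⟩
    · rintro ⟨i, ⟨hi, hvi⟩, rfl⟩
      exact ⟨hPmem i hi, hvi⟩
  have hSv : ∀ v ∈ (range m).biUnion P, v ∉ E0 →
      SvF Ed x v = ∑ i ∈ (range m).filter (fun i => v ∈ P i), ∏ u ∈ (P i).erase v, x u := by
    intro v hv hvE
    rw [SvF, hfilterP v hv hvE]
    refine Finset.sum_image ?_
    intro i hi j hj hij
    simp only [Finset.coe_filter, Finset.mem_filter, Finset.mem_range, Set.mem_setOf_eq] at hi hj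
    exact hPinj hi.1 hj.1 hij
  have hidxMid : ∀ i, i < m → (range m).filter (fun j => Mid i ∈ P j) = {i} := by
    intro i hi
    ext j
    simp only [Finset.mem_filter, Finset.mem_range, Finset.mem_singleton]
    constructor
    · rintro ⟨h1, h2⟩
      exact hMidonly i j hi h2
    · rintro rfl
      exact ⟨hi, hMidmem _ hi⟩
  have hidxJ : ∀ t, 1 ≤ t → t < m → (range m).filter (fun j => J t ∈ P j) = {t-1, t} := by
    intro t h1 h2
    ext j
    simp only [Finset.mem_filter, Finset.mem_range, Finset.mem_insert, Finset.mem_singleton]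
    constructor
    · rintro ⟨ha, hb⟩
      rcases hJonly t j h1 (le_of_lt h2) hb with h | h
      · exact Or.inl h
      · exact Or.inr h.2
    · rintro (rfl | rfl)
      · exact ⟨by omega, hJmem1 t h1 (le_of_lt h2)⟩
      · exact ⟨h2, hJmem2 _ h2⟩
  have hidxJm : (range m).filter (fun j => J m ∈ P j) = {m-1} := by
    ext j
    simp only [Finset.mem_filter, Finset.mem_range, Finset.mem_singleton]
    constructor
    · rintro ⟨ha, hb⟩
      rcases hJonly m j hm le_rfl hb with h | h
      · exact h
      · omega
    · rintro rfl
      exact ⟨by omega, hJmem1 m hm le_rfl⟩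
  have hSvMid : ∀ i, i < m → SvF Ed x (Mid i) = x (J i) * x (J (i+1)) := by
    intro i hi
    have hvm : Mid i ∈ (range m).biUnion P := (hmemVP _).mpr ⟨i, hi, hMidmem i hi⟩
    rw [hSv _ hvm (hnotE0 _ hvm (hMidneα i hi)), hidxMid i hi, Finset.sum_singleton,
      hprodMid i hi]
  have hSvJ : ∀ t, 1 ≤ t → t < m →
      SvF Ed x (J t) = x (J (t-1)) * x (Mid (t-1)) + x (Mid t) * x (J (t+1)) := by
    intro t h1 h2
    have hvm : J t ∈ (range m).biUnion P := (hmemVP _).mpr ⟨t, h2, hJmem2 t h2⟩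
    rw [hSv _ hvm (hnotE0 _ hvm (hJneα t h1 (le_of_lt h2))), hidxJ t h1 h2,
      Finset.sum_pair (by omega : t - 1 ≠ t)]
    have e : t - 1 + 1 = t := by omega
    have hp := hprodJs (t-1) (by omega)
    rw [e] at hp
    rw [hp, hprodJ t h2]
  have hSvJm : SvF Ed x (J m) = x (J (m-1)) * x (Mid (m-1)) := by
    have hvm : J m ∈ (range m).biUnion P :=
      (hmemVP _).mpr ⟨m-1, by omega, hJmem1 m hm le_rfl⟩
    rw [hSv _ hvm (hnotE0 _ hvm (hJneα m hm le_rfl)), hidxJm, Finset.sum_singleton]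
    have e : m - 1 + 1 = m := by omega
    have hp := hprodJs (m-1) (by omega)
    rw [e] at hp
    rw [hp]
  -- numeric case analysis
  have hG1 : (0:ℝ) < gg ^ (3:ℕ) := pow_pos gg_pos 3
  have hGm0 : (0:ℝ) ≤ (gg ^ (3:ℕ))^m := pow_nonneg (le_of_lt hG1) m
  have hMidcase : ∀ i, i < m →
      SvF Ed x (Mid i) ≤ (gg ^ (3:ℕ))⁻¹ * (x (Mid i))^2 ∧
      (gg ^ (3:ℕ))⁻¹ * (x (Mid i))^3 - x (Mid i) * SvF Ed x (Mid i) ≤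
        (if i + 1 = m then (gg ^ (3:ℕ))^m else 0) := by
    intro i hi
    rw [hSvMid i hi, hxMid i hi, hxJ i hi]
    by_cases h : i + 1 < m
    · rw [hxJ (i+1) h, if_neg (by omega)]
      have e1 : gg ^ i * gg ^ (i+1) = gg ^ (2*i+1) := pow_mul_pow _ _ _ (by ring)
      have e2 : (gg ^ (i+2))^2 = gg ^ (2*i+4) := pow_pow2 _ _ (by ring)
      have e3 : (gg ^ (3:ℕ))⁻¹ * gg ^ (2*i+4) = gg ^ (2*i+1) := ginv_mul' _ _ (by ring)
      have e4 : (gg ^ (i+2))^3 = gg ^ (3*i+6) := pow_pow3 _ _ (by ring)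
      have e5 : (gg ^ (3:ℕ))⁻¹ * gg ^ (3*i+6) = gg ^ (3*i+3) := ginv_mul' _ _ (by ring)
      have e6 : gg ^ (i+2) * gg ^ (2*i+1) = gg ^ (3*i+3) := pow_mul_pow _ _ _ (by ring)
      constructor
      · rw [e1, e2, e3]
      · rw [e1, e4, e5, e6]
        simp
    · have hmeq : m = i + 1 := by omega
      subst hmeq
      rw [hxJm, if_pos rfl]
      have e1 : gg ^ i * gg ^ (i+1+1) = gg ^ (2*i+2) := pow_mul_pow _ _ _ (by ring)
      have e2 : (gg ^ (i+2))^2 = gg ^ (2*i+4) := pow_pow2 _ _ (by ring)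
      have e3 : (gg ^ (3:ℕ))⁻¹ * gg ^ (2*i+4) = gg ^ (2*i+1) := ginv_mul' _ _ (by ring)
      have e4 : (gg ^ (i+2))^3 = gg ^ (3*i+6) := pow_pow3 _ _ (by ring)
      have e5 : (gg ^ (3:ℕ))⁻¹ * gg ^ (3*i+6) = gg ^ (3*i+3) := ginv_mul' _ _ (by ring)
      have e6 : gg ^ (i+2) * gg ^ (2*i+2) = gg ^ (3*i+4) := pow_mul_pow _ _ _ (by ring)
      have e7 : (gg ^ (3:ℕ))^(i+1) = gg ^ (3*i+3) := Gpow _ _ (by ring)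
      constructor
      · rw [e1, e2, e3]
        exact gg_pow_le (by omega)
      · rw [e1, e4, e5, e6, e7]
        linarith [gpow_nonneg (3*i+4)]
  have hJcase : ∀ t, 1 ≤ t → t ≤ m →
      SvF Ed x (J t) ≤ (gg ^ (3:ℕ))⁻¹ * (x (J t))^2 ∧
      (gg ^ (3:ℕ))⁻¹ * (x (J t))^3 - x (J t) * SvF Ed x (J t) ≤
        (if m ≤ t + 1 then (gg ^ (3:ℕ))^m else 0) := by
    intro t h1 h2
    rcases Nat.eq_or_lt_of_le h2 with heq | hlt
    · subst heq
      rw [hSvJm, hxJm, hxJ (t-1) (by omega), hxMid (t-1) (by omega), if_pos (by omega)]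
      obtain ⟨mm, rfl⟩ : ∃ mm, t = mm + 1 := ⟨t - 1, by omega⟩
      simp only [Nat.add_sub_cancel]
      have e1 : gg ^ mm * gg ^ (mm+2) = gg ^ (2*mm+2) := pow_mul_pow _ _ _ (by ring)
      have e2 : (gg ^ (mm+1+1))^2 = gg ^ (2*mm+4) := pow_pow2 _ _ (by ring)
      have e3 : (gg ^ (3:ℕ))⁻¹ * gg ^ (2*mm+4) = gg ^ (2*mm+1) := ginv_mul' _ _ (by ring)
      have e4 : (gg ^ (mm+1+1))^3 = gg ^ (3*mm+6) := pow_pow3 _ _ (by ring)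
      have e5 : (gg ^ (3:ℕ))⁻¹ * gg ^ (3*mm+6) = gg ^ (3*mm+3) := ginv_mul' _ _ (by ring)
      have e6 : gg ^ (mm+1+1) * gg ^ (2*mm+2) = gg ^ (3*mm+4) := pow_mul_pow _ _ _ (by ring)
      have e7 : (gg ^ (3:ℕ))^(mm+1) = gg ^ (3*mm+3) := Gpow _ _ (by ring)
      constructor
      · rw [e1, e2, e3]
        exact gg_pow_le (by omega)
      · rw [e1, e4, e5, e6, e7]
        linarith [gpow_nonneg (3*mm+4)]
    · rw [hSvJ t h1 hlt, hxJ t hlt, hxJ (t-1) (by omega), hxMid (t-1) (by omega),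
        hxMid t hlt]
      obtain ⟨tt, rfl⟩ : ∃ tt, t = tt + 1 := ⟨t - 1, by omega⟩
      simp only [Nat.add_sub_cancel]
      have e1 : gg ^ tt * gg ^ (tt+2) = gg ^ (2*tt+2) := pow_mul_pow _ _ _ (by ring)
      have e3 : (gg ^ (tt+1))^2 = gg ^ (2*tt+2) := pow_pow2 _ _ (by ring)
      have e4 := inv_split (2*tt+2)
      rw [show 2*tt+2+3 = 2*tt+5 from by ring] at e4
      have e5 : (gg ^ (tt+1))^3 = gg ^ (3*tt+3) := pow_pow3 _ _ (by ring)
      have e6 := inv_split (3*tt+3)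
      rw [show 3*tt+3+3 = 3*tt+6 from by ring] at e6
      have e7 : gg ^ (tt+1) * gg ^ (2*tt+2) = gg ^ (3*tt+3) := pow_mul_pow _ _ _ (by ring)
      by_cases h : tt + 1 + 1 < m
      · rw [hxJ (tt+1+1) h, if_neg (by omega)]
        have e2 : gg ^ (tt+1+2) * gg ^ (tt+1+1) = gg ^ (2*tt+5) := pow_mul_pow _ _ _ (by ring)
        have e8 : gg ^ (tt+1) * gg ^ (2*tt+5) = gg ^ (3*tt+6) := pow_mul_pow _ _ _ (by ring)
        constructor
        · rw [e1, e2, e3, e4]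
        · rw [e1, e2, e5, e6, mul_add, e7, e8]
          simp
      · have hmeq : m = tt + 2 := by omega
        subst hmeq
        rw [show tt+1+1 = tt+2 from by omega, hxJm, if_pos (by omega)]
        have e2 : gg ^ (tt+1+2) * gg ^ (tt+2+1) = gg ^ (2*tt+6) := pow_mul_pow _ _ _ (by ring)
        have e8 : gg ^ (tt+1) * gg ^ (2*tt+6) = gg ^ (3*tt+7) := pow_mul_pow _ _ _ (by ring)
        have e9 : (gg ^ (3:ℕ))^(tt+2) = gg ^ (3*tt+6) := Gpow _ _ (by ring)
        constructor
        · rw [e1, e2, e3, e4]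
          linarith [gg_pow_le (show 2*tt+5 ≤ 2*tt+6 from by omega)]
        · rw [e1, e2, e5, e6, mul_add, e7, e8, e9]
          linarith [gpow_nonneg (3*tt+7)]
  -- classification of vertices
  have hclassify : ∀ v, v ∈ (range m).biUnion P → v ≠ α →
      (∃ t, 1 ≤ t ∧ t ≤ m ∧ v = J t) ∨ (∃ i, i < m ∧ v = Mid i) := by
    intro v hv hne
    obtain ⟨i, hi, hmem⟩ := (hmemVP v).mp hv
    obtain ⟨hset, _, _, _⟩ := hD1 i hi
    rw [hset] at hmem
    rcases Finset.mem_insert.mp hmem with rfl | hmem2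
    · rcases Nat.eq_zero_or_pos i with rfl | hpos
      · exact absurd hJ0 hne
      · exact Or.inl ⟨i, hpos, le_of_lt hi, rfl⟩
    · rcases Finset.mem_insert.mp hmem2 with rfl | hmem3
      · exact Or.inr ⟨i, hi, rfl⟩
      · have h5 := Finset.mem_singleton.mp hmem3
        exact Or.inl ⟨i+1, by omega, by omega, h5⟩
  have hmain1 : ∀ v ∈ (range m).biUnion P, v ∉ E0 →
      SvF Ed x v ≤ (gg ^ (3:ℕ))⁻¹ * (x v)^2 := by
    intro v hv hvE
    have hne : v ≠ α := fun h => hvE (h ▸ hαmem.2)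
    rcases hclassify v hv hne with ⟨t, ha, hb, rfl⟩ | ⟨i, hi, rfl⟩
    · exact (hJcase t ha hb).1
    · exact (hMidcase i hi).1
  have hVPsplit : ((range m).biUnion P) \ {α} = ((Icc 1 m).image J) ∪ ((range m).image Mid) := by
    ext v
    simp only [Finset.mem_sdiff, Finset.mem_singleton, Finset.mem_union, Finset.mem_image,
      Finset.mem_Icc, Finset.mem_range]
    constructor
    · rintro ⟨hv, hne⟩
      rcases hclassify v hv hne with ⟨t, ha, hb, rfl⟩ | ⟨i, hi, rfl⟩
      · exact Or.inl ⟨t, ⟨ha, hb⟩, rfl⟩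
      · exact Or.inr ⟨i, hi, rfl⟩
    · rintro (⟨t, ⟨ha, hb⟩, rfl⟩ | ⟨i, hi, rfl⟩)
      · exact ⟨(hmemVP _).mpr ⟨t-1, by omega, hJmem1 t ha hb⟩, hJneα t ha hb⟩
      · exact ⟨(hmemVP _).mpr ⟨i, hi, hMidmem i hi⟩, hMidneα i hi⟩
  have hdisj : Disjoint ((Icc 1 m).image J) ((range m).image Mid) := by
    rw [Finset.disjoint_left]
    intro v hv1 hv2
    simp only [Finset.mem_image, Finset.mem_Icc, Finset.mem_range] at hv1 hv2
    obtain ⟨t, ⟨ha, hb⟩, rfl⟩ := hv1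
    obtain ⟨i, hi, heq⟩ := hv2
    rcases Nat.eq_or_lt_of_le hb with heqm | hlt
    · have hmm : Mid i ∈ P (t-1) := by rw [heq]; exact hJmem1 t ha hb
      have h5 : i = t - 1 := (hMidonly i (t-1) hi hmm).symm
      subst h5
      subst heqm
      rw [hJm, hMidlast] at heq
      exact hbcne heq.symm
    · have hmm : Mid i ∈ P t := by rw [heq]; exact hJmem2 t hlt
      have h5 : i = t := (hMidonly i t hi hmm).symm
      have hmm2 : Mid i ∈ P (t-1) := by rw [heq]; exact hJmem1 t ha hb
      have h6 : i = t - 1 := (hMidonly i (t-1) hi hmm2).symm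
      omega
  have hinjJ : ∀ a ∈ Icc 1 m, ∀ b ∈ Icc 1 m, J a = J b → a = b := by
    intro a ha b hb heq
    simp only [Finset.mem_Icc] at ha hb
    have h5 : J a ∈ P (b-1) := by rw [heq]; exact hJmem1 b hb.1 hb.2
    have h6 : J b ∈ P (a-1) := by rw [← heq]; exact hJmem1 a ha.1 ha.2
    have e1 := hJonly a (b-1) ha.1 ha.2 h5
    have e2 := hJonly b (a-1) hb.1 hb.2 h6
    omega
  have hinjMid : ∀ a ∈ range m, ∀ b ∈ range m, Mid a = Mid b → a = b := by
    intro a ha b hb heq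
    simp only [Finset.mem_range] at ha hb
    have h5 : Mid a ∈ P b := by rw [heq]; exact hMidmem b hb
    exact (hMidonly a b ha h5).symm
  have hsum2 : ∑ v ∈ ((range m).biUnion P) \ {α},
      ((gg ^ (3:ℕ))⁻¹ * (x v)^3 - x v * SvF Ed x v) ≤ 3 * (gg ^ (3:ℕ))^m := by
    rw [hVPsplit, Finset.sum_union hdisj, Finset.sum_image hinjJ, Finset.sum_image hinjMid]
    have hb1 : ∑ t ∈ Icc 1 m, ((gg ^ (3:ℕ))⁻¹ * (x (J t))^3 - x (J t) * SvF Ed x (J t)) ≤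
        2 * (gg ^ (3:ℕ))^m := by
      calc ∑ t ∈ Icc 1 m, ((gg ^ (3:ℕ))⁻¹ * (x (J t))^3 - x (J t) * SvF Ed x (J t))
          ≤ ∑ t ∈ Icc 1 m, (if m ≤ t + 1 then (gg ^ (3:ℕ))^m else 0) := by
            refine Finset.sum_le_sum ?_
            intro t ht
            simp only [Finset.mem_Icc] at ht
            exact (hJcase t ht.1 ht.2).2
      _ = ∑ t ∈ (Icc 1 m).filter (fun t => m ≤ t + 1), (gg ^ (3:ℕ))^m :=
            (Finset.sum_filter _ _).symm
      _ = ((Icc 1 m).filter (fun t => m ≤ t + 1)).card • (gg ^ (3:ℕ))^m :=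
            Finset.sum_const _
      _ ≤ 2 * (gg ^ (3:ℕ))^m := by
            rw [nsmul_eq_mul]
            have hcard : ((Icc 1 m).filter (fun t => m ≤ t + 1)).card ≤ 2 := by
              have hsub : (Icc 1 m).filter (fun t => m ≤ t + 1) ⊆ Icc (m-1) m := by
                intro t ht
                simp only [Finset.mem_filter, Finset.mem_Icc] at ht ⊢
                omega
              calc ((Icc 1 m).filter (fun t => m ≤ t + 1)).card
                  ≤ (Icc (m-1) m).card := Finset.card_le_card hsub
              _ ≤ 2 := by rw [Nat.card_Icc]; omega
            exact mul_le_mul_of_nonneg_right (by exact_mod_cast hcard) hGm0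
    have hb2 : ∑ i ∈ range m, ((gg ^ (3:ℕ))⁻¹ * (x (Mid i))^3 - x (Mid i) * SvF Ed x (Mid i)) ≤
        1 * (gg ^ (3:ℕ))^m := by
      calc ∑ i ∈ range m, ((gg ^ (3:ℕ))⁻¹ * (x (Mid i))^3 - x (Mid i) * SvF Ed x (Mid i))
          ≤ ∑ i ∈ range m, (if i + 1 = m then (gg ^ (3:ℕ))^m else 0) := by
            refine Finset.sum_le_sum ?_
            intro i hi
            simp only [Finset.mem_range] at hi
            exact (hMidcase i hi).2
      _ = ∑ i ∈ (range m).filter (fun i => i + 1 = m), (gg ^ (3:ℕ))^m :=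
            (Finset.sum_filter _ _).symm
      _ = ((range m).filter (fun i => i + 1 = m)).card • (gg ^ (3:ℕ))^m :=
            Finset.sum_const _
      _ ≤ 1 * (gg ^ (3:ℕ))^m := by
            rw [nsmul_eq_mul]
            have hcard : ((range m).filter (fun i => i + 1 = m)).card ≤ 1 := by
              have hsub : (range m).filter (fun i => i + 1 = m) ⊆ {m-1} := by
                intro i hi
                simp only [Finset.mem_filter, Finset.mem_range, Finset.mem_singleton] at hi ⊢
                omega
              calc ((range m).filter (fun i => i + 1 = m)).card
                  ≤ ({m-1} : Finset ℕ).card := Finset.card_le_card hsub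
              _ ≤ 1 := by simp
            exact mul_le_mul_of_nonneg_right (by exact_mod_cast hcard) hGm0
    linarith
  have hprod0 : ∏ u ∈ (P 0).erase α, x u = x (Mid 0) * x (J 1) := by
    rw [← hJ0]
    exact hprodJ 0 (by omega)
  have h34 : (∏ u ∈ (P 0).erase α, x u ≤ gg ^ (3:ℕ)) ∧
      ((gg ^ (3:ℕ))⁻¹ - 1 - ∏ u ∈ (P 0).erase α, x u ≤ (gg ^ (3:ℕ))^m) := by
    rw [hprod0, hxMid 0 (by omega)]
    have e2 := inv_split 0
    rw [pow_zero, mul_one] at e2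
    norm_num at e2
    by_cases h : 1 < m
    · rw [hxJ 1 h]
      have e : gg ^ (0+2) * gg ^ 1 = gg ^ (3:ℕ) := pow_mul_pow _ _ _ (by norm_num)
      rw [e]
      refine ⟨le_rfl, ?_⟩
      rw [e2]
      linarith
    · have hmeq : m = 1 := by omega
      subst hmeq
      rw [show (1:ℕ) = 0 + 1 from rfl, hxJm]
      have e : gg ^ (0+2) * gg ^ (0+1+1) = gg ^ (4:ℕ) := pow_mul_pow _ _ _ (by norm_num)
      rw [e]
      constructor
      · exact gg_pow_le (by norm_num)
      · rw [e2, pow_one]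
        linarith [gpow_nonneg 4]
  exact ⟨hmain1, hsum2, h34.1, h34.2, hα0⟩
lemma convert_path {m : ℕ} (H : FinsetHypergraph ℕ) (hunif : H.IsUniform 3)
    (E0 : Finset ℕ) (αv : ℕ) (p : Fin m → Finset ℕ) (hap : H.IsAttachedPath E0 αv p)
    (P : ℕ → Finset ℕ) (hP : ∀ (i : ℕ) (h : i < m), P i = p ⟨i, h⟩)
    (hP2 : ∀ i, m ≤ i → P i = ∅) :
    (∀ i < m, (P i).card = 3) ∧ (∀ i, i + 1 < m → (P i ∩ P (i+1)).card = 1) ∧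
    (∀ i j, i + 1 < j → P i ∩ P j = ∅) ∧ (∀ i < m, (αv ∈ P i ↔ i = 0)) ∧
    (∀ i < m, P i ∈ H.edges) ∧ ((range m).biUnion P = pathVerts p) ∧
    ((range m).biUnion P ∩ E0 = {αv}) ∧ (∀ i < m, P i ≠ E0) := by
  obtain ⟨⟨hcons, hfar⟩, hmem, hneq, hinter, hend⟩ := hap
  have hbiu : (range m).biUnion P = pathVerts p := by
    ext v
    simp only [pathVerts]
    constructor
    · intro hv
      obtain ⟨i, hi, hv⟩ := Finset.mem_biUnion.mp hv
      rw [Finset.mem_range] at hi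
      refine Finset.mem_biUnion.mpr ⟨⟨i, hi⟩, Finset.mem_univ _, ?_⟩
      rwa [hP i hi] at hv
    · intro hv
      obtain ⟨i, _, hv⟩ := Finset.mem_biUnion.mp hv
      refine Finset.mem_biUnion.mpr ⟨(i : ℕ), Finset.mem_range.mpr i.isLt, ?_⟩
      rw [hP i.1 i.2]
      rwa [Fin.eta]
  refine ⟨?_, ?_, ?_, ?_, ?_, hbiu, by rw [hbiu]; exact hinter, ?_⟩
  · intro i hi
    rw [hP i hi]
    exact hunif _ (hmem _)
  · intro i hi
    have h5 := hcons ⟨i, by omega⟩ ⟨i+1, hi⟩ rfl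
    rw [hP i (by omega), hP (i+1) hi]
    exact h5
  · intro i j hij
    by_cases hj : j < m
    · have h5 := hfar ⟨i, by omega⟩ ⟨j, hj⟩ hij
      rw [hP i (by omega), hP j hj]
      exact h5
    · rw [hP2 j (by omega), Finset.inter_empty]
  · intro i hi
    rw [hP i hi]
    exact hend ⟨i, hi⟩
  · intro i hi
    rw [hP i hi]
    exact hmem _
  · intro i hi
    rw [hP i hi]
    exact hneq _

lemma center_filter (H : FinsetHypergraph ℕ) (E0 : Finset ℕ) (hE0 : E0 ∈ H.edges)
    (av : ℕ) (hav : av ∈ E0) (R0 : Finset ℕ) (hR0 : R0 ∈ H.edges) (havR : av ∈ R0)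
    (hne : E0 ≠ R0)
    (honlyc : ∀ f ∈ H.edges, av ∈ f → f = E0 ∨ f = R0) :
    H.edges.filter (fun f => av ∈ f) = ({E0, R0} : Finset (Finset ℕ)) := by
  ext f
  simp only [Finset.mem_filter, Finset.mem_insert, Finset.mem_singleton]
  constructor
  · rintro ⟨hf, hm⟩
    exact honlyc f hf hm
  · rintro (rfl | rfl)
    · exact ⟨hE0, hav⟩
    · exact ⟨hR0, havR⟩

lemma amgm (xa xb xc ya yb yc : ℝ) (hxa : 0 < xa) (hxb : 0 < xb) (hxc : 0 < xc)
    (hya : 0 ≤ ya) (hyb : 0 ≤ yb) (hyc : 0 ≤ yc) :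
    ya * (yb * yc) ≤ (1/3) * ((ya^3 / xa^2) * (xb * xc) + ((yb^3 / xb^2) * (xa * xc) +
      (yc^3 / xc^2) * (xa * xb))) := by
  have key : 3 * ((ya*xb*xc) * (yb*xa*xc) * (yc*xa*xb)) ≤
      (ya*xb*xc)^3 + (yb*xa*xc)^3 + (yc*xa*xb)^3 := by
    set A := ya*xb*xc
    set B := yb*xa*xc
    set C := yc*xa*xb
    have hA : 0 ≤ A := by positivity
    have hB : 0 ≤ B := by positivity
    have hC : 0 ≤ C := by positivity
    nlinarith [sq_nonneg (A - B), sq_nonneg (B - C), sq_nonneg (A - C),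
      add_nonneg (add_nonneg hA hB) hC, mul_nonneg hA hB, mul_nonneg hB hC, mul_nonneg hA hC]
  rw [← sub_nonneg]
  have e : (1/3) * ((ya^3 / xa^2) * (xb * xc) + ((yb^3 / xb^2) * (xa * xc) +
      (yc^3 / xc^2) * (xa * xb))) - ya * (yb * yc) =
      (((ya*xb*xc)^3 + (yb*xa*xc)^3 + (yc*xa*xb)^3) - 3 * ((ya*xb*xc) * (yb*xa*xc) * (yc*xa*xb)))
        / (3 * (xa^2 * xb^2 * xc^2)) := by
    field_simp
    ring
  rw [e]
  apply div_nonneg (by linarith) (by positivity)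

lemma swap_sum (H : FinsetHypergraph ℕ) (F : ℕ → Finset ℕ → ℝ) :
    ∑ f ∈ H.edges, ∑ v ∈ f, F v f =
      ∑ v ∈ H.vertexSet, ∑ f ∈ H.edges.filter (fun f => v ∈ f), F v f := by
  have hsub : ∀ f ∈ H.edges, f ⊆ H.vertexSet := by
    intro f hf v hv
    exact Finset.mem_biUnion.mpr ⟨f, hf, hv⟩
  calc ∑ f ∈ H.edges, ∑ v ∈ f, F v f
      = ∑ f ∈ H.edges, ∑ v ∈ H.vertexSet, if v ∈ f then F v f else 0 := by
        refine Finset.sum_congr rfl fun f hf => ?_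
        rw [Finset.sum_ite_mem, Finset.inter_eq_right.mpr (hsub f hf)]
  _ = ∑ v ∈ H.vertexSet, ∑ f ∈ H.edges, if v ∈ f then F v f else 0 := Finset.sum_comm
  _ = ∑ v ∈ H.vertexSet, ∑ f ∈ H.edges.filter (fun f => v ∈ f), F v f := by
        refine Finset.sum_congr rfl fun v _ => ?_
        rw [Finset.sum_filter]
lemma mem_pathVerts' {m : ℕ} {g : Fin m → Finset ℕ} {i : Fin m} {v : ℕ} (hv : v ∈ g i) :
    v ∈ pathVerts g :=
  Finset.mem_biUnion.mpr ⟨i, Finset.mem_univ _, hv⟩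

set_option maxHeartbeats 2000000 in
lemma main_bounds (m n k : ℕ) (hm : 1 ≤ m) (hn : 1 ≤ n) (hk : 1 ≤ k)
    (H : FinsetHypergraph ℕ) (hF : H.IsF3 m n k) :
    2 * phiR - 3 * ((gg ^ (3:ℕ))^m + (gg ^ (3:ℕ))^n + (gg ^ (3:ℕ))^k) ≤ H.spectralRadius 3 ∧
    H.spectralRadius 3 ≤ 2 * phiR := by
  classical
  obtain ⟨hunif, a, p, q, s, hainj, hE0mem, hap, haq, has, hpq, hps, hqs, hclass⟩ := hF
  set E0 : Finset ℕ := Finset.univ.image a with hE0def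
  have ha01 : a 0 ≠ a 1 := fun h => absurd (hainj h) (by decide)
  have ha02 : a 0 ≠ a 2 := fun h => absurd (hainj h) (by decide)
  have ha12 : a 1 ≠ a 2 := fun h => absurd (hainj h) (by decide)
  have hE0eq : E0 = {a 0, a 1, a 2} := by
    rw [hE0def, show (Finset.univ : Finset (Fin 3)) = {0, 1, 2} from by decide]
    simp [Finset.image_insert]
  have ha0E : a 0 ∈ E0 := by rw [hE0eq]; simp
  have ha1E : a 1 ∈ E0 := by rw [hE0eq]; simp
  have ha2E : a 2 ∈ E0 := by rw [hE0eq]; simp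
  set P : ℕ → Finset ℕ := fun i => if h : i < m then p ⟨i, h⟩ else ∅ with hPdef
  set Q : ℕ → Finset ℕ := fun i => if h : i < n then q ⟨i, h⟩ else ∅ with hQdef
  set SS : ℕ → Finset ℕ := fun i => if h : i < k then s ⟨i, h⟩ else ∅ with hSSdef
  have hPv : ∀ (i : ℕ) (h : i < m), P i = p ⟨i, h⟩ := fun i h => by
    simp only [hPdef]; exact dif_pos h
  have hP2 : ∀ i, m ≤ i → P i = ∅ := fun i h => by
    simp only [hPdef]; exact dif_neg (by omega)
  have hQv : ∀ (i : ℕ) (h : i < n), Q i = q ⟨i, h⟩ := fun i h => by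
    simp only [hQdef]; exact dif_pos h
  have hQ2 : ∀ i, n ≤ i → Q i = ∅ := fun i h => by
    simp only [hQdef]; exact dif_neg (by omega)
  have hSv : ∀ (i : ℕ) (h : i < k), SS i = s ⟨i, h⟩ := fun i h => by
    simp only [hSSdef]; exact dif_pos h
  have hS2 : ∀ i, k ≤ i → SS i = ∅ := fun i h => by
    simp only [hSSdef]; exact dif_neg (by omega)
  obtain ⟨hcard_p, hcons_p, hfar_p, hend_p, hmem_p, hbiu_p, hVE_p, hneqE0_p⟩ :=
    convert_path H hunif E0 (a 0) p hap P hPv hP2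
  obtain ⟨hcard_q, hcons_q, hfar_q, hend_q, hmem_q, hbiu_q, hVE_q, hneqE0_q⟩ :=
    convert_path H hunif E0 (a 1) q haq Q hQv hQ2
  obtain ⟨hcard_s, hcons_s, hfar_s, hend_s, hmem_s, hbiu_s, hVE_s, hneqE0_s⟩ :=
    convert_path H hunif E0 (a 2) s has SS hSv hS2
  have hPQ : (range m).biUnion P ∩ (range n).biUnion Q = ∅ := by
    rw [hbiu_p, hbiu_q]; exact hpq
  have hPS : (range m).biUnion P ∩ (range k).biUnion SS = ∅ := by
    rw [hbiu_p, hbiu_s]; exact hps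
  have hQS : (range n).biUnion Q ∩ (range k).biUnion SS = ∅ := by
    rw [hbiu_q, hbiu_s]; exact hqs
  set x : ℕ → ℝ := fun v =>
    if v ∈ E0 then 1 else
    if v ∈ (range m).biUnion P then gg ^ pweight P v else
    if v ∈ (range n).biUnion Q then gg ^ pweight Q v else
    if v ∈ (range k).biUnion SS then gg ^ pweight SS v else 0 with hxdef
  have hxE0 : ∀ v ∈ E0, x v = 1 := fun v hv => by
    simp only [hxdef]; rw [if_pos hv]
  have hxP : ∀ v ∈ (range m).biUnion P, v ∉ E0 → x v = gg ^ pweight P v := by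
    intro v hv hvE
    simp only [hxdef]; rw [if_neg hvE, if_pos hv]
  have hnotP : ∀ v ∈ (range n).biUnion Q, v ∉ (range m).biUnion P := by
    intro v hv hvP
    have h4 : v ∈ (range m).biUnion P ∩ (range n).biUnion Q := Finset.mem_inter.mpr ⟨hvP, hv⟩
    rw [hPQ] at h4; exact absurd h4 (Finset.notMem_empty v)
  have hnotP' : ∀ v ∈ (range k).biUnion SS, v ∉ (range m).biUnion P := by
    intro v hv hvP
    have h4 : v ∈ (range m).biUnion P ∩ (range k).biUnion SS := Finset.mem_inter.mpr ⟨hvP, hv⟩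
    rw [hPS] at h4; exact absurd h4 (Finset.notMem_empty v)
  have hnotQ' : ∀ v ∈ (range k).biUnion SS, v ∉ (range n).biUnion Q := by
    intro v hv hvQ
    have h4 : v ∈ (range n).biUnion Q ∩ (range k).biUnion SS := Finset.mem_inter.mpr ⟨hvQ, hv⟩
    rw [hQS] at h4; exact absurd h4 (Finset.notMem_empty v)
  have hxQ : ∀ v ∈ (range n).biUnion Q, v ∉ E0 → x v = gg ^ pweight Q v := by
    intro v hv hvE
    simp only [hxdef]; rw [if_neg hvE, if_neg (hnotP v hv), if_pos hv]
  have hxS : ∀ v ∈ (range k).biUnion SS, v ∉ E0 → x v = gg ^ pweight SS v := by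
    intro v hv hvE
    simp only [hxdef]; rw [if_neg hvE, if_neg (hnotP' v hv), if_neg (hnotQ' v hv), if_pos hv]
  have honly_p : ∀ v ∈ (range m).biUnion P, v ∉ E0 → ∀ f ∈ H.edges, v ∈ f →
      ∃ i, i < m ∧ f = P i := by
    intro v hv hvE f hf hvf
    rcases hclass f hf with rfl | ⟨i, rfl⟩ | ⟨i, rfl⟩ | ⟨i, rfl⟩
    · exact absurd hvf hvE
    · exact ⟨i.1, i.2, by rw [hPv i.1 i.2, Fin.eta]⟩
    · exfalso
      have hvp : v ∈ pathVerts p := by rw [← hbiu_p]; exact hv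
      have h4 : v ∈ pathVerts p ∩ pathVerts q :=
        Finset.mem_inter.mpr ⟨hvp, mem_pathVerts' hvf⟩
      rw [hpq] at h4; exact absurd h4 (Finset.notMem_empty v)
    · exfalso
      have hvp : v ∈ pathVerts p := by rw [← hbiu_p]; exact hv
      have h4 : v ∈ pathVerts p ∩ pathVerts s :=
        Finset.mem_inter.mpr ⟨hvp, mem_pathVerts' hvf⟩
      rw [hps] at h4; exact absurd h4 (Finset.notMem_empty v)
  have honly_q : ∀ v ∈ (range n).biUnion Q, v ∉ E0 → ∀ f ∈ H.edges, v ∈ f →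
      ∃ i, i < n ∧ f = Q i := by
    intro v hv hvE f hf hvf
    rcases hclass f hf with rfl | ⟨i, rfl⟩ | ⟨i, rfl⟩ | ⟨i, rfl⟩
    · exact absurd hvf hvE
    · exfalso
      have hvq : v ∈ pathVerts q := by rw [← hbiu_q]; exact hv
      have h4 : v ∈ pathVerts p ∩ pathVerts q :=
        Finset.mem_inter.mpr ⟨mem_pathVerts' hvf, hvq⟩
      rw [hpq] at h4; exact absurd h4 (Finset.notMem_empty v)
    · exact ⟨i.1, i.2, by rw [hQv i.1 i.2, Fin.eta]⟩
    · exfalso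
      have hvq : v ∈ pathVerts q := by rw [← hbiu_q]; exact hv
      have h4 : v ∈ pathVerts q ∩ pathVerts s :=
        Finset.mem_inter.mpr ⟨hvq, mem_pathVerts' hvf⟩
      rw [hqs] at h4; exact absurd h4 (Finset.notMem_empty v)
  have honly_s : ∀ v ∈ (range k).biUnion SS, v ∉ E0 → ∀ f ∈ H.edges, v ∈ f →
      ∃ i, i < k ∧ f = SS i := by
    intro v hv hvE f hf hvf
    rcases hclass f hf with rfl | ⟨i, rfl⟩ | ⟨i, rfl⟩ | ⟨i, rfl⟩
    · exact absurd hvf hvE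
    · exfalso
      have hvs : v ∈ pathVerts s := by rw [← hbiu_s]; exact hv
      have h4 : v ∈ pathVerts p ∩ pathVerts s :=
        Finset.mem_inter.mpr ⟨mem_pathVerts' hvf, hvs⟩
      rw [hps] at h4; exact absurd h4 (Finset.notMem_empty v)
    · exfalso
      have hvs : v ∈ pathVerts s := by rw [← hbiu_s]; exact hv
      have h4 : v ∈ pathVerts q ∩ pathVerts s :=
        Finset.mem_inter.mpr ⟨mem_pathVerts' hvf, hvs⟩
      rw [hqs] at h4; exact absurd h4 (Finset.notMem_empty v)
    · exact ⟨i.1, i.2, by rw [hSv i.1 i.2, Fin.eta]⟩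
  obtain ⟨hB_p, hC_p, hD_p, hE_p, hα0_p⟩ :=
    path_lemma H.edges E0 m hm P (a 0) x hcard_p hP2 hcons_p hfar_p hend_p hVE_p hmem_p honly_p
      (hxE0 _ ha0E) hxP
  obtain ⟨hB_q, hC_q, hD_q, hE_q, hα0_q⟩ :=
    path_lemma H.edges E0 n hn Q (a 1) x hcard_q hQ2 hcons_q hfar_q hend_q hVE_q hmem_q honly_q
      (hxE0 _ ha1E) hxQ
  obtain ⟨hB_s, hC_s, hD_s, hE_s, hα0_s⟩ :=
    path_lemma H.edges E0 k hk SS (a 2) x hcard_s hS2 hcons_s hfar_s hend_s hVE_s hmem_s honly_s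
      (hxE0 _ ha2E) hxS
  have hVchar : ∀ v, v ∈ H.vertexSet ↔ (v ∈ E0 ∨ v ∈ (range m).biUnion P ∨
      v ∈ (range n).biUnion Q ∨ v ∈ (range k).biUnion SS) := by
    intro v
    constructor
    · intro hv
      obtain ⟨f, hf, hvf⟩ := Finset.mem_biUnion.mp hv
      simp only [id] at hvf
      rcases hclass f hf with rfl | ⟨i, rfl⟩ | ⟨i, rfl⟩ | ⟨i, rfl⟩
      · exact Or.inl hvf
      · refine Or.inr (Or.inl (Finset.mem_biUnion.mpr ⟨i.1, Finset.mem_range.mpr i.2, ?_⟩))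
        rw [hPv i.1 i.2, Fin.eta]; exact hvf
      · refine Or.inr (Or.inr (Or.inl (Finset.mem_biUnion.mpr
          ⟨i.1, Finset.mem_range.mpr i.2, ?_⟩)))
        rw [hQv i.1 i.2, Fin.eta]; exact hvf
      · refine Or.inr (Or.inr (Or.inr (Finset.mem_biUnion.mpr
          ⟨i.1, Finset.mem_range.mpr i.2, ?_⟩)))
        rw [hSv i.1 i.2, Fin.eta]; exact hvf
    · intro hv
      rcases hv with hv | hv | hv | hv
      · exact Finset.mem_biUnion.mpr ⟨E0, hE0mem, hv⟩
      · obtain ⟨i, hi, hvi⟩ := Finset.mem_biUnion.mp hv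
        rw [Finset.mem_range] at hi
        exact Finset.mem_biUnion.mpr ⟨P i, hmem_p i hi, hvi⟩
      · obtain ⟨i, hi, hvi⟩ := Finset.mem_biUnion.mp hv
        rw [Finset.mem_range] at hi
        exact Finset.mem_biUnion.mpr ⟨Q i, hmem_q i hi, hvi⟩
      · obtain ⟨i, hi, hvi⟩ := Finset.mem_biUnion.mp hv
        rw [Finset.mem_range] at hi
        exact Finset.mem_biUnion.mpr ⟨SS i, hmem_s i hi, hvi⟩
  have hxnn : ∀ v, 0 ≤ x v := by
    intro v
    simp only [hxdef]
    split_ifs <;> first | exact le_of_lt (pow_pos gg_pos _) | norm_num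
  have hxpos : ∀ v ∈ H.vertexSet, 0 < x v := by
    intro v hv
    by_cases hE : v ∈ E0
    · rw [hxE0 v hE]; norm_num
    · rcases (hVchar v).mp hv with h | h | h | h
      · exact absurd h hE
      · rw [hxP v h hE]; exact pow_pos gg_pos _
      · rw [hxQ v h hE]; exact pow_pos gg_pos _
      · rw [hxS v h hE]; exact pow_pos gg_pos _
  -- center vertices
  have honlyc0 : ∀ f ∈ H.edges, a 0 ∈ f → f = E0 ∨ f = P 0 := by
    intro f hf hvf
    rcases hclass f hf with rfl | ⟨i, rfl⟩ | ⟨i, rfl⟩ | ⟨i, rfl⟩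
    · exact Or.inl rfl
    · right
      have h5 : (i : ℕ) = 0 := (hap.2.2.2.2 i).mp hvf
      have h6 : P ((i : ℕ)) = p i := by rw [hPv i.1 i.2, Fin.eta]
      rw [← h6, h5]
    · exfalso
      have h4 : a 0 ∈ pathVerts q ∩ E0 := Finset.mem_inter.mpr ⟨mem_pathVerts' hvf, ha0E⟩
      rw [haq.2.2.2.1] at h4
      exact ha01 (Finset.mem_singleton.mp h4)
    · exfalso
      have h4 : a 0 ∈ pathVerts s ∩ E0 := Finset.mem_inter.mpr ⟨mem_pathVerts' hvf, ha0E⟩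
      rw [has.2.2.2.1] at h4
      exact ha02 (Finset.mem_singleton.mp h4)
  have honlyc1 : ∀ f ∈ H.edges, a 1 ∈ f → f = E0 ∨ f = Q 0 := by
    intro f hf hvf
    rcases hclass f hf with rfl | ⟨i, rfl⟩ | ⟨i, rfl⟩ | ⟨i, rfl⟩
    · exact Or.inl rfl
    · exfalso
      have h4 : a 1 ∈ pathVerts p ∩ E0 := Finset.mem_inter.mpr ⟨mem_pathVerts' hvf, ha1E⟩
      rw [hap.2.2.2.1] at h4
      exact ha01 (Finset.mem_singleton.mp h4).symm
    · right
      have h5 : (i : ℕ) = 0 := (haq.2.2.2.2 i).mp hvf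
      have h6 : Q ((i : ℕ)) = q i := by rw [hQv i.1 i.2, Fin.eta]
      rw [← h6, h5]
    · exfalso
      have h4 : a 1 ∈ pathVerts s ∩ E0 := Finset.mem_inter.mpr ⟨mem_pathVerts' hvf, ha1E⟩
      rw [has.2.2.2.1] at h4
      exact ha12 (Finset.mem_singleton.mp h4)
  have honlyc2 : ∀ f ∈ H.edges, a 2 ∈ f → f = E0 ∨ f = SS 0 := by
    intro f hf hvf
    rcases hclass f hf with rfl | ⟨i, rfl⟩ | ⟨i, rfl⟩ | ⟨i, rfl⟩
    · exact Or.inl rfl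
    · exfalso
      have h4 : a 2 ∈ pathVerts p ∩ E0 := Finset.mem_inter.mpr ⟨mem_pathVerts' hvf, ha2E⟩
      rw [hap.2.2.2.1] at h4
      exact ha02 (Finset.mem_singleton.mp h4).symm
    · exfalso
      have h4 : a 2 ∈ pathVerts q ∩ E0 := Finset.mem_inter.mpr ⟨mem_pathVerts' hvf, ha2E⟩
      rw [haq.2.2.2.1] at h4
      exact ha12 (Finset.mem_singleton.mp h4).symm
    · right
      have h5 : (i : ℕ) = 0 := (has.2.2.2.2 i).mp hvf
      have h6 : SS ((i : ℕ)) = s i := by rw [hSv i.1 i.2, Fin.eta]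
      rw [← h6, h5]
  have hfilter0 := center_filter H E0 hE0mem (a 0) ha0E (P 0) (hmem_p 0 hm) hα0_p
    (Ne.symm (hneqE0_p 0 hm)) honlyc0
  have hfilter1 := center_filter H E0 hE0mem (a 1) ha1E (Q 0) (hmem_q 0 hn) hα0_q
    (Ne.symm (hneqE0_q 0 hn)) honlyc1
  have hfilter2 := center_filter H E0 hE0mem (a 2) ha2E (SS 0) (hmem_s 0 hk) hα0_s
    (Ne.symm (hneqE0_s 0 hk)) honlyc2
  have hxa0 : x (a 0) = 1 := hxE0 _ ha0E
  have hxa1 : x (a 1) = 1 := hxE0 _ ha1E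
  have hxa2 : x (a 2) = 1 := hxE0 _ ha2E
  have hprodE0a0 : ∏ u ∈ E0.erase (a 0), x u = 1 := by
    rw [hE0eq, erase3a x ha01 ha02 ha12, hxa1, hxa2, one_mul]
  have hprodE0a1 : ∏ u ∈ E0.erase (a 1), x u = 1 := by
    rw [hE0eq, erase3b x ha01 ha02 ha12, hxa0, hxa2, one_mul]
  have hprodE0a2 : ∏ u ∈ E0.erase (a 2), x u = 1 := by
    rw [hE0eq, erase3c x ha01 ha02 ha12, hxa0, hxa1, one_mul]
  have hSva0 : SvF H.edges x (a 0) = 1 + ∏ u ∈ (P 0).erase (a 0), x u := by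
    rw [SvF, hfilter0, Finset.sum_pair (Ne.symm (hneqE0_p 0 hm)), hprodE0a0]
  have hSva1 : SvF H.edges x (a 1) = 1 + ∏ u ∈ (Q 0).erase (a 1), x u := by
    rw [SvF, hfilter1, Finset.sum_pair (Ne.symm (hneqE0_q 0 hn)), hprodE0a1]
  have hSva2 : SvF H.edges x (a 2) = 1 + ∏ u ∈ (SS 0).erase (a 2), x u := by
    rw [SvF, hfilter2, Finset.sum_pair (Ne.symm (hneqE0_s 0 hk)), hprodE0a2]
  have hB_eq : (gg ^ (3:ℕ))⁻¹ = 1 + gg ^ (3:ℕ) := by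
    have e2 := inv_split 0
    rw [pow_zero, mul_one] at e2
    norm_num at e2
    exact e2
  have hcenter0 : SvF H.edges x (a 0) ≤ (gg ^ (3:ℕ))⁻¹ * (x (a 0))^2 ∧
      (gg ^ (3:ℕ))⁻¹ * (x (a 0))^3 - x (a 0) * SvF H.edges x (a 0) ≤ (gg ^ (3:ℕ))^m := by
    rw [hSva0, hxa0]
    simp only [one_pow, mul_one, one_mul]
    exact ⟨by linarith [hD_p, hB_eq.le, hB_eq.ge], by linarith [hE_p]⟩
  have hcenter1 : SvF H.edges x (a 1) ≤ (gg ^ (3:ℕ))⁻¹ * (x (a 1))^2 ∧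
      (gg ^ (3:ℕ))⁻¹ * (x (a 1))^3 - x (a 1) * SvF H.edges x (a 1) ≤ (gg ^ (3:ℕ))^n := by
    rw [hSva1, hxa1]
    simp only [one_pow, mul_one, one_mul]
    exact ⟨by linarith [hD_q, hB_eq.le, hB_eq.ge], by linarith [hE_q]⟩
  have hcenter2 : SvF H.edges x (a 2) ≤ (gg ^ (3:ℕ))⁻¹ * (x (a 2))^2 ∧
      (gg ^ (3:ℕ))⁻¹ * (x (a 2))^3 - x (a 2) * SvF H.edges x (a 2) ≤ (gg ^ (3:ℕ))^k := by
    rw [hSva2, hxa2]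
    simp only [one_pow, mul_one, one_mul]
    exact ⟨by linarith [hD_s, hB_eq.le, hB_eq.ge], by linarith [hE_s]⟩
  have hSvall : ∀ v ∈ H.vertexSet, SvF H.edges x v ≤ (gg ^ (3:ℕ))⁻¹ * (x v)^2 := by
    intro v hv
    by_cases hE : v ∈ E0
    · have h4 : v = a 0 ∨ v = a 1 ∨ v = a 2 := by
        rw [hE0eq] at hE; simpa using hE
      rcases h4 with rfl | rfl | rfl
      exacts [hcenter0.1, hcenter1.1, hcenter2.1]
    · rcases (hVchar v).mp hv with h | h | h | h
      · exact absurd h hE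
      · exact hB_p v h hE
      · exact hB_q v h hE
      · exact hB_s v h hE
  -- sup machinery
  have hub : ∀ t ∈ {t : ℝ | ∃ y : ℕ → ℝ, (∀ v, 0 ≤ y v) ∧ (∃ v ∈ H.vertexSet, y v ≠ 0) ∧
      t = (∑ e ∈ H.edges, ∏ v ∈ e, y v) / (∑ v ∈ H.vertexSet, y v ^ 3)},
      t ≤ (gg ^ (3:ℕ))⁻¹ / 3 := by
    rintro t ⟨y, hynn, ⟨v0, hv0V, hv0ne⟩, rfl⟩
    have hDpos : 0 < ∑ v ∈ H.vertexSet, y v ^ 3 := by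
      have h1 : 0 < y v0 ^ 3 := pow_pos ((hynn v0).lt_of_ne (Ne.symm hv0ne)) 3
      have h2 : y v0 ^ 3 ≤ ∑ v ∈ H.vertexSet, y v ^ 3 :=
        Finset.single_le_sum (fun i _ => pow_nonneg (hynn i) 3) hv0V
      linarith
    rw [div_le_iff₀ hDpos]
    have hedge : ∀ f ∈ H.edges, ∏ v ∈ f, y v ≤
        (1/3) * ∑ v ∈ f, (y v ^ 3 / x v ^ 2) * ∏ u ∈ f.erase v, x u := by
      intro f hf
      have hsubV : ∀ u ∈ f, u ∈ H.vertexSet := fun u hu =>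
        Finset.mem_biUnion.mpr ⟨f, hf, hu⟩
      obtain ⟨A, Bv, C, hAB, hAC, hBC, rfl⟩ := Finset.card_eq_three.mp (hunif f hf)
      have hxA := hxpos A (hsubV A (by simp))
      have hxB := hxpos Bv (hsubV Bv (by simp))
      have hxC := hxpos C (hsubV C (by simp))
      rw [Finset.prod_insert (by simp [hAB, hAC]), Finset.prod_pair hBC,
        Finset.sum_insert (by simp [hAB, hAC]), Finset.sum_pair hBC,
        erase3a x hAB hAC hBC, erase3b x hAB hAC hBC, erase3c x hAB hAC hBC]
      exact amgm (x A) (x Bv) (x C) (y A) (y Bv) (y C) hxA hxB hxC (hynn A) (hynn Bv) (hynn C)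
    calc ∑ e ∈ H.edges, ∏ v ∈ e, y v
        ≤ ∑ f ∈ H.edges, (1/3) * ∑ v ∈ f, (y v ^ 3 / x v ^ 2) * ∏ u ∈ f.erase v, x u :=
          Finset.sum_le_sum hedge
    _ = (1/3) * ∑ f ∈ H.edges, ∑ v ∈ f, (y v ^ 3 / x v ^ 2) * ∏ u ∈ f.erase v, x u :=
          (Finset.mul_sum _ _ _).symm
    _ = (1/3) * ∑ v ∈ H.vertexSet, ∑ f ∈ H.edges.filter (fun f => v ∈ f),
          (y v ^ 3 / x v ^ 2) * ∏ u ∈ f.erase v, x u := by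
          rw [swap_sum H (fun v f => (y v ^ 3 / x v ^ 2) * ∏ u ∈ f.erase v, x u)]
    _ = (1/3) * ∑ v ∈ H.vertexSet, (y v ^ 3 / x v ^ 2) * SvF H.edges x v := by
          congr 1
          refine Finset.sum_congr rfl fun v _ => ?_
          rw [SvF, Finset.mul_sum]
    _ ≤ (1/3) * ∑ v ∈ H.vertexSet, (gg ^ (3:ℕ))⁻¹ * y v ^ 3 := by
          refine mul_le_mul_of_nonneg_left (Finset.sum_le_sum ?_) (by norm_num)
          intro v hv
          have hx := hxpos v hv
          have h10 : (y v ^ 3 / x v ^ 2) * SvF H.edges x v ≤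
              (y v ^ 3 / x v ^ 2) * ((gg ^ (3:ℕ))⁻¹ * x v ^ 2) :=
            mul_le_mul_of_nonneg_left (hSvall v hv) (div_nonneg (pow_nonneg (hynn v) 3) (sq_nonneg _))
          have h11 : (y v ^ 3 / x v ^ 2) * ((gg ^ (3:ℕ))⁻¹ * x v ^ 2) =
              (gg ^ (3:ℕ))⁻¹ * y v ^ 3 := by
            field_simp
          linarith
    _ = (gg ^ (3:ℕ))⁻¹ / 3 * ∑ v ∈ H.vertexSet, y v ^ 3 := by
          rw [← Finset.mul_sum]; ring
  -- lower bound element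
  have ha0V : a 0 ∈ H.vertexSet := (hVchar _).mpr (Or.inl ha0E)
  have hid : ∑ v ∈ H.vertexSet, x v * SvF H.edges x v = 3 * ∑ e ∈ H.edges, ∏ v ∈ e, x v := by
    calc ∑ v ∈ H.vertexSet, x v * SvF H.edges x v
        = ∑ v ∈ H.vertexSet, ∑ f ∈ H.edges.filter (fun f => v ∈ f),
            x v * ∏ u ∈ f.erase v, x u := by
          refine Finset.sum_congr rfl fun v _ => ?_
          rw [SvF, Finset.mul_sum]
    _ = ∑ f ∈ H.edges, ∑ v ∈ f, x v * ∏ u ∈ f.erase v, x u :=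
          (swap_sum H (fun v f => x v * ∏ u ∈ f.erase v, x u)).symm
    _ = ∑ f ∈ H.edges, ∑ v ∈ f, ∏ u ∈ f, x u := by
          refine Finset.sum_congr rfl fun f hf => Finset.sum_congr rfl fun v hv => ?_
          exact Finset.mul_prod_erase f x hv
    _ = ∑ f ∈ H.edges, (f.card : ℝ) * ∏ u ∈ f, x u := by
          refine Finset.sum_congr rfl fun f hf => ?_
          rw [Finset.sum_const, nsmul_eq_mul]
    _ = 3 * ∑ e ∈ H.edges, ∏ v ∈ e, x v := by
          rw [Finset.mul_sum]
          refine Finset.sum_congr rfl fun f hf => ?_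
          rw [hunif f hf]
          norm_num
  have hD03 : (3:ℝ) ≤ ∑ v ∈ H.vertexSet, x v ^ 3 := by
    have hsub : ({a 0, a 1, a 2} : Finset ℕ) ⊆ H.vertexSet := by
      intro v hv
      refine (hVchar v).mpr (Or.inl ?_)
      rw [hE0eq]; exact hv
    have h1 : ∑ v ∈ ({a 0, a 1, a 2} : Finset ℕ), x v ^ 3 = 3 := by
      rw [Finset.sum_insert (by simp [ha01, ha02]), Finset.sum_pair ha12, hxa0, hxa1, hxa2]
      norm_num
    have h2 : ∑ v ∈ ({a 0, a 1, a 2} : Finset ℕ), x v ^ 3 ≤ ∑ v ∈ H.vertexSet, x v ^ 3 :=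
      Finset.sum_le_sum_of_subset_of_nonneg hsub (fun v _ _ => pow_nonneg (hxnn v) 3)
    linarith
  have hD0pos : (0:ℝ) < ∑ v ∈ H.vertexSet, x v ^ 3 := by linarith
  -- deficit bound
  have hΔnn : ∀ v ∈ H.vertexSet,
      0 ≤ (gg ^ (3:ℕ))⁻¹ * x v ^ 3 - x v * SvF H.edges x v := by
    intro v hv
    have h3 : x v * SvF H.edges x v ≤ x v * ((gg ^ (3:ℕ))⁻¹ * x v ^ 2) :=
      mul_le_mul_of_nonneg_left (hSvall v hv) (hxnn v)
    have h4 : x v * ((gg ^ (3:ℕ))⁻¹ * x v ^ 2) = (gg ^ (3:ℕ))⁻¹ * x v ^ 3 := by ring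
    linarith
  have hVsplit : H.vertexSet = E0 ∪ ((((range m).biUnion P) \ {a 0}) ∪
      ((((range n).biUnion Q) \ {a 1}) ∪ (((range k).biUnion SS) \ {a 2}))) := by
    ext v
    constructor
    · intro hv
      rcases (hVchar v).mp hv with h | h | h | h
      · exact Finset.mem_union_left _ h
      · by_cases he : v = a 0
        · exact Finset.mem_union_left _ (he ▸ ha0E)
        · exact Finset.mem_union_right _ (Finset.mem_union_left _
            (Finset.mem_sdiff.mpr ⟨h, by simpa using he⟩))
      · by_cases he : v = a 1
        · exact Finset.mem_union_left _ (he ▸ ha1E)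
        · exact Finset.mem_union_right _ (Finset.mem_union_right _ (Finset.mem_union_left _
            (Finset.mem_sdiff.mpr ⟨h, by simpa using he⟩)))
      · by_cases he : v = a 2
        · exact Finset.mem_union_left _ (he ▸ ha2E)
        · exact Finset.mem_union_right _ (Finset.mem_union_right _ (Finset.mem_union_right _
            (Finset.mem_sdiff.mpr ⟨h, by simpa using he⟩)))
    · intro hv
      rcases Finset.mem_union.mp hv with h | h
      · exact (hVchar v).mpr (Or.inl h)
      · rcases Finset.mem_union.mp h with h | h
        · exact (hVchar v).mpr (Or.inr (Or.inl (Finset.mem_sdiff.mp h).1))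
        · rcases Finset.mem_union.mp h with h | h
          · exact (hVchar v).mpr (Or.inr (Or.inr (Or.inl (Finset.mem_sdiff.mp h).1)))
          · exact (hVchar v).mpr (Or.inr (Or.inr (Or.inr (Finset.mem_sdiff.mp h).1)))
  have hd3 : Disjoint (((range n).biUnion Q) \ {a 1}) (((range k).biUnion SS) \ {a 2}) := by
    rw [Finset.disjoint_left]
    intro v h1 h2
    exact hnotQ' v (Finset.mem_sdiff.mp h2).1 (Finset.mem_sdiff.mp h1).1
  have hd2 : Disjoint (((range m).biUnion P) \ {a 0})
      ((((range n).biUnion Q) \ {a 1}) ∪ (((range k).biUnion SS) \ {a 2})) := by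
    rw [Finset.disjoint_left]
    intro v h1 h2
    rcases Finset.mem_union.mp h2 with h | h
    · exact hnotP v (Finset.mem_sdiff.mp h).1 (Finset.mem_sdiff.mp h1).1
    · exact hnotP' v (Finset.mem_sdiff.mp h).1 (Finset.mem_sdiff.mp h1).1
  have hd1 : Disjoint E0 ((((range m).biUnion P) \ {a 0}) ∪
      ((((range n).biUnion Q) \ {a 1}) ∪ (((range k).biUnion SS) \ {a 2}))) := by
    rw [Finset.disjoint_left]
    intro v hvE hvA
    rcases Finset.mem_union.mp hvA with h | h
    · obtain ⟨h1, h2⟩ := Finset.mem_sdiff.mp h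
      have h4 : v ∈ ((range m).biUnion P) ∩ E0 := Finset.mem_inter.mpr ⟨h1, hvE⟩
      rw [hVE_p] at h4
      exact h2 h4
    · rcases Finset.mem_union.mp h with h | h
      · obtain ⟨h1, h2⟩ := Finset.mem_sdiff.mp h
        have h4 : v ∈ ((range n).biUnion Q) ∩ E0 := Finset.mem_inter.mpr ⟨h1, hvE⟩
        rw [hVE_q] at h4
        exact h2 h4
      · obtain ⟨h1, h2⟩ := Finset.mem_sdiff.mp h
        have h4 : v ∈ ((range k).biUnion SS) ∩ E0 := Finset.mem_inter.mpr ⟨h1, hvE⟩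
        rw [hVE_s] at h4
        exact h2 h4
  have hΔle : ∑ v ∈ H.vertexSet, ((gg ^ (3:ℕ))⁻¹ * x v ^ 3 - x v * SvF H.edges x v) ≤
      4 * ((gg ^ (3:ℕ))^m + (gg ^ (3:ℕ))^n + (gg ^ (3:ℕ))^k) := by
    rw [hVsplit, Finset.sum_union hd1, Finset.sum_union hd2, Finset.sum_union hd3]
    have hE0sum : ∑ v ∈ E0, ((gg ^ (3:ℕ))⁻¹ * x v ^ 3 - x v * SvF H.edges x v) ≤
        (gg ^ (3:ℕ))^m + (gg ^ (3:ℕ))^n + (gg ^ (3:ℕ))^k := by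
      rw [hE0eq, Finset.sum_insert (by simp [ha01, ha02]), Finset.sum_pair ha12]
      linarith [hcenter0.2, hcenter1.2, hcenter2.2]
    linarith [hC_p, hC_q, hC_s, hE0sum]
  have hΔnn' : 0 ≤ ∑ v ∈ H.vertexSet, ((gg ^ (3:ℕ))⁻¹ * x v ^ 3 - x v * SvF H.edges x v) :=
    Finset.sum_nonneg hΔnn
  have hΔsum : ∑ v ∈ H.vertexSet, ((gg ^ (3:ℕ))⁻¹ * x v ^ 3 - x v * SvF H.edges x v) =
      (gg ^ (3:ℕ))⁻¹ * (∑ v ∈ H.vertexSet, x v ^ 3) - 3 * ∑ e ∈ H.edges, ∏ v ∈ e, x v := by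
    rw [Finset.sum_sub_distrib, ← Finset.mul_sum, hid]
  have ht0mem : (∑ e ∈ H.edges, ∏ v ∈ e, x v) / (∑ v ∈ H.vertexSet, x v ^ 3) ∈
      {t : ℝ | ∃ y : ℕ → ℝ, (∀ v, 0 ≤ y v) ∧ (∃ v ∈ H.vertexSet, y v ≠ 0) ∧
      t = (∑ e ∈ H.edges, ∏ v ∈ e, y v) / (∑ v ∈ H.vertexSet, y v ^ 3)} :=
    ⟨x, hxnn, ⟨a 0, ha0V, by rw [hxa0]; norm_num⟩, rfl⟩
  have ht0 : (gg ^ (3:ℕ))⁻¹ / 3 -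
      ((gg ^ (3:ℕ))^m + (gg ^ (3:ℕ))^n + (gg ^ (3:ℕ))^k) / 2 ≤
      (∑ e ∈ H.edges, ∏ v ∈ e, x v) / (∑ v ∈ H.vertexSet, x v ^ 3) := by
    set N0 := ∑ e ∈ H.edges, ∏ v ∈ e, x v with hN0def
    set D0 := ∑ v ∈ H.vertexSet, x v ^ 3 with hD0def
    set Dl := ∑ v ∈ H.vertexSet, ((gg ^ (3:ℕ))⁻¹ * x v ^ 3 - x v * SvF H.edges x v) with hDl
    have hN0 : N0 = ((gg ^ (3:ℕ))⁻¹ * D0 - Dl) / 3 := by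
      linarith [hΔsum]
    have e : N0 / D0 = (gg ^ (3:ℕ))⁻¹ / 3 - Dl / (3 * D0) := by
      rw [hN0]
      field_simp
    rw [e]
    have h2 : Dl / (3 * D0) ≤ ((gg ^ (3:ℕ))^m + (gg ^ (3:ℕ))^n + (gg ^ (3:ℕ))^k) / 2 := by
      rw [div_le_div_iff₀ (by linarith) (by norm_num)]
      have hg3 : (0:ℝ) ≤ gg ^ (3:ℕ) := le_of_lt (pow_pos gg_pos 3)
      have hsumnn : (0:ℝ) ≤ (gg ^ (3:ℕ))^m + (gg ^ (3:ℕ))^n + (gg ^ (3:ℕ))^k := by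
        have h1 := pow_nonneg hg3 m
        have h2 := pow_nonneg hg3 n
        have h3 := pow_nonneg hg3 k
        linarith
      nlinarith [hΔle, hΔnn', hD03, hsumnn]
    linarith
  have hspec : H.spectralRadius 3 = 6 * sSup {t : ℝ | ∃ y : ℕ → ℝ, (∀ v, 0 ≤ y v) ∧
      (∃ v ∈ H.vertexSet, y v ≠ 0) ∧
      t = (∑ e ∈ H.edges, ∏ v ∈ e, y v) / (∑ v ∈ H.vertexSet, y v ^ 3)} := by
    rw [FinsetHypergraph.spectralRadius]
    norm_num [Nat.factorial]
  have hbdd : BddAbove {t : ℝ | ∃ y : ℕ → ℝ, (∀ v, 0 ≤ y v) ∧ (∃ v ∈ H.vertexSet, y v ≠ 0) ∧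
      t = (∑ e ∈ H.edges, ∏ v ∈ e, y v) / (∑ v ∈ H.vertexSet, y v ^ 3)} :=
    ⟨(gg ^ (3:ℕ))⁻¹ / 3, fun t ht => hub t ht⟩
  have hsup_ge := le_csSup hbdd ht0mem
  have hsup_le : sSup {t : ℝ | ∃ y : ℕ → ℝ, (∀ v, 0 ≤ y v) ∧ (∃ v ∈ H.vertexSet, y v ≠ 0) ∧
      t = (∑ e ∈ H.edges, ∏ v ∈ e, y v) / (∑ v ∈ H.vertexSet, y v ^ 3)} ≤
      (gg ^ (3:ℕ))⁻¹ / 3 :=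
    Real.sSup_le hub (le_of_lt (div_pos (inv_pos.mpr (pow_pos gg_pos 3)) (by norm_num)))
  have hphiB : (gg ^ (3:ℕ))⁻¹ = phiR := gg_inv_cube
  constructor
  · rw [hspec]
    rw [← hphiB]
    linarith [ht0, hsup_ge]
  · rw [hspec, ← hphiB]
    linarith [hsup_le]

/-- **Lemma (limit of `ρ(F^{(3)}_{m,n,k})`).**  As `m, n, k → ∞`,
`ρ(F^{(3)}_{m,n,k}) → 2·(2+√5)^{1/3}`. -/
theorem tendsto_spectralRadius_F3 (F : ℕ → ℕ → ℕ → FinsetHypergraph ℕ)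
    (hF : ∀ m n k : ℕ, 0 < m → 0 < n → 0 < k → (F m n k).IsF3 m n k) :
    Filter.Tendsto (fun p : ℕ × ℕ × ℕ => (F p.1 p.2.1 p.2.2).spectralRadius 3)
      Filter.atTop (nhds (2 * (2 + Real.sqrt 5) ^ ((1 : ℝ) / 3))) := by
  rw [target_const]
  have hG0 : (0:ℝ) ≤ gg ^ (3:ℕ) := le_of_lt (pow_pos gg_pos 3)
  have hG1 : gg ^ (3:ℕ) < 1 := by
    calc gg ^ (3:ℕ) ≤ gg ^ 1 := gg_pow_le (by norm_num)
    _ = gg := pow_one gg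
    _ < 1 := gg_lt_one
  have hpow : Filter.Tendsto (fun i : ℕ => (gg ^ (3:ℕ)) ^ i) Filter.atTop (nhds 0) :=
    tendsto_pow_atTop_nhds_zero_of_lt_one hG0 hG1
  have h1 : Filter.Tendsto (fun p : ℕ × ℕ × ℕ => p.1) Filter.atTop Filter.atTop := by
    rw [← Filter.prod_atTop_atTop_eq]
    exact Filter.tendsto_fst
  have hsnd : Filter.Tendsto (fun p : ℕ × ℕ × ℕ => p.2) Filter.atTop Filter.atTop := by
    rw [← Filter.prod_atTop_atTop_eq]
    exact Filter.tendsto_snd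
  have hfst2 : Filter.Tendsto (fun p : ℕ × ℕ => p.1) Filter.atTop Filter.atTop := by
    rw [← Filter.prod_atTop_atTop_eq]
    exact Filter.tendsto_fst
  have hsnd2 : Filter.Tendsto (fun p : ℕ × ℕ => p.2) Filter.atTop Filter.atTop := by
    rw [← Filter.prod_atTop_atTop_eq]
    exact Filter.tendsto_snd
  have h21 : Filter.Tendsto (fun p : ℕ × ℕ × ℕ => p.2.1) Filter.atTop Filter.atTop :=
    hfst2.comp hsnd
  have h22 : Filter.Tendsto (fun p : ℕ × ℕ × ℕ => p.2.2) Filter.atTop Filter.atTop :=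
    hsnd2.comp hsnd
  have hsum : Filter.Tendsto (fun p : ℕ × ℕ × ℕ =>
      (gg ^ (3:ℕ)) ^ p.1 + (gg ^ (3:ℕ)) ^ p.2.1 + (gg ^ (3:ℕ)) ^ p.2.2)
      Filter.atTop (nhds 0) := by
    have h5 := ((hpow.comp h1).add (hpow.comp h21)).add (hpow.comp h22)
    simpa using h5
  have hl : Filter.Tendsto (fun p : ℕ × ℕ × ℕ =>
      2 * phiR - 3 * ((gg ^ (3:ℕ)) ^ p.1 + (gg ^ (3:ℕ)) ^ p.2.1 + (gg ^ (3:ℕ)) ^ p.2.2))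
      Filter.atTop (nhds (2 * phiR)) := by
    have h5 := (hsum.const_mul (3:ℝ)).const_sub (2 * phiR)
    simpa using h5
  have hev : ∀ᶠ p : ℕ × ℕ × ℕ in Filter.atTop, ((1,1,1) : ℕ × ℕ × ℕ) ≤ p :=
    Filter.eventually_ge_atTop _
  refine tendsto_of_tendsto_of_tendsto_of_le_of_le' hl tendsto_const_nhds ?_ ?_
  · filter_upwards [hev] with p hp
    have hp1 : 1 ≤ p.1 := hp.1
    have hp2 : 1 ≤ p.2.1 := hp.2.1
    have hp3 : 1 ≤ p.2.2 := hp.2.2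
    exact (main_bounds p.1 p.2.1 p.2.2 hp1 hp2 hp3 _ (hF p.1 p.2.1 p.2.2 hp1 hp2 hp3)).1
  · filter_upwards [hev] with p hp
    have hp1 : 1 ≤ p.1 := hp.1
    have hp2 : 1 ≤ p.2.1 := hp.2.1
    have hp3 : 1 ≤ p.2.2 := hp.2.2
    exact (main_bounds p.1 p.2.1 p.2.2 hp1 hp2 hp3 _ (hF p.1 p.2.1 p.2.2 hp1 hp2 hp3)).2
end

section
/- For r ≥ 2, let S_r^{(r)} denote the r-uniform edge-star: the hypergraph with r+1 edges F_0 = {v_1,…,v_r}, F_1,…,F_r, where F_i ∩ F_0 = {v_i} for 1 ≤ i ≤ r and F_i ∩ F_j = ∅ for 1 ≤ i < j ≤ r. Then for every r ≥ 6, ρ(S_r^{(r)}) > (r−1)!·(2+√5)^{1/r}. -/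
open Finset

namespace Hypergraph'

variable {V : Type} [DecidableEq V]

/-- The `r`-uniform edge-star `S_r^{(r)}`: edges `F_0 = {v 0, …, v (r-1)}` and
`F_1, …, F_r` with `F_i ∩ F_0 = {v i}` and `F_i ∩ F_j = ∅` for `i ≠ j`. -/
def IsEdgeStar (H : Hypergraph' V) (r : ℕ) : Prop :=
  H.IsUniform r ∧
    ∃ (v : Fin r → V) (F : Fin r → Finset V),
      Function.Injective v ∧ Finset.univ.image v ∈ H.edges ∧ (∀ i, F i ∈ H.edges) ∧
      (∀ i, F i ∩ Finset.univ.image v = {v i}) ∧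
      (∀ i j, i ≠ j → F i ∩ F j = ∅) ∧
      H.edges = insert (Finset.univ.image v) (Finset.univ.image F)

/-- The `r`-uniform star with `k` edges: `k` edges through a common vertex `u`,
otherwise pairwise disjoint. -/
def IsStar (H : Hypergraph' V) (r k : ℕ) : Prop :=
  H.IsUniform r ∧
    ∃ (u : V) (F : Fin k → Finset V),
      Function.Injective F ∧ (∀ i, F i ∈ H.edges) ∧ (∀ i, u ∈ F i) ∧
      (∀ i j, i ≠ j → F i ∩ F j = {u}) ∧ H.edges = Finset.univ.image F

/-- `S^{(3)}_{4+}`: four 3-edges through a common vertex `u` (otherwise pairwise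
disjoint) plus a fifth edge meeting exactly one of them in exactly one vertex `w ≠ u`
and disjoint from the other three. -/
def IsS34plus (H : Hypergraph' V) : Prop :=
  H.IsUniform 3 ∧
    ∃ (u w : V) (F : Fin 4 → Finset V) (g : Finset V),
      Function.Injective F ∧ (∀ i, F i ∈ H.edges) ∧ g ∈ H.edges ∧
      (∀ i, u ∈ F i) ∧ (∀ i j, i ≠ j → F i ∩ F j = {u}) ∧
      w ≠ u ∧ w ∈ F 0 ∧ g ∩ F 0 = {w} ∧ (∀ i, i ≠ 0 → g ∩ F i = ∅) ∧
      H.edges = insert g (Finset.univ.image F)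

end Hypergraph'

open Hypergraph'


section AuxProof

variable {V : Type} [DecidableEq V]

open Hypergraph'

lemma aux_subset_vertexSet {H : Hypergraph' V} {e : Finset V} (he : e ∈ H.edges) :
    e ⊆ H.vertexSet := fun w hw => Finset.mem_biUnion.mpr ⟨e, he, hw⟩

lemma aux_ratio_le (r : ℕ) (hr : 1 ≤ r) (H : Hypergraph' V) (hunif : H.IsUniform r)
    (x : V → ℝ) (hx0 : ∀ v, 0 ≤ x v) (hxne : ∃ v ∈ H.vertexSet, x v ≠ 0) :
    (r.factorial : ℝ) * ((∑ e ∈ H.edges, ∏ v ∈ e, x v) / (∑ v ∈ H.vertexSet, x v ^ r))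
      ≤ H.spectralRadius r := by
  apply mul_le_mul_of_nonneg_left _ (by positivity)
  apply le_csSup
  · refine ⟨(H.edges.card : ℝ), ?_⟩
    rintro t ⟨y, hy0, ⟨w, hw, hwne⟩, rfl⟩
    have hyw : 0 < y w := (hy0 w).lt_of_ne (Ne.symm hwne)
    have hD : 0 < ∑ v ∈ H.vertexSet, y v ^ r :=
      Finset.sum_pos' (fun v _ => pow_nonneg (hy0 v) r) ⟨w, hw, pow_pos hyw r⟩
    rw [div_le_iff₀ hD]
    calc ∑ e ∈ H.edges, ∏ v ∈ e, y v
        ≤ ∑ _e ∈ H.edges, ∑ v ∈ H.vertexSet, y v ^ r := by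
          apply Finset.sum_le_sum
          intro e he
          have hene : e.Nonempty := Finset.card_pos.mp (by rw [hunif e he]; omega)
          obtain ⟨m, hm, hmax⟩ := Finset.exists_max_image e y hene
          calc ∏ v ∈ e, y v ≤ ∏ _v ∈ e, y m :=
                Finset.prod_le_prod (fun v _ => hy0 v) (fun v hv => hmax v hv)
            _ = y m ^ r := by rw [Finset.prod_const, hunif e he]
            _ ≤ ∑ v ∈ e, y v ^ r := Finset.single_le_sum (f := fun v => y v ^ r) (fun v _ => pow_nonneg (hy0 v) r) hm
            _ ≤ ∑ v ∈ H.vertexSet, y v ^ r :=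
                Finset.sum_le_sum_of_subset_of_nonneg (aux_subset_vertexSet he)
                  (fun v _ _ => pow_nonneg (hy0 v) r)
      _ = H.edges.card * (∑ v ∈ H.vertexSet, y v ^ r) := by
          rw [Finset.sum_const, nsmul_eq_mul]
  · exact ⟨x, hx0, hxne, rfl⟩

lemma aux_edgeStar_sums (r : ℕ) (hr : 2 ≤ r) (H : Hypergraph' V) (hH : H.IsEdgeStar r)
    (a : ℝ) (ha : 1 ≤ a) :
    ∃ x : V → ℝ, (∀ v, 0 ≤ x v) ∧ (∃ v ∈ H.vertexSet, x v ≠ 0) ∧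
      (∑ e ∈ H.edges, ∏ v ∈ e, x v) = a ^ r + r * a ∧
      (∑ v ∈ H.vertexSet, x v ^ r) = r * a ^ r + (r * (r - 1) : ℕ) := by
  obtain ⟨hunif, v, F, hvinj, hF0, hFmem, hFv, hFdisj, hedges⟩ := hH
  set F0 := Finset.univ.image v with hF0def
  have ha0 : (0:ℝ) < a := lt_of_lt_of_le one_pos ha
  have hcard0 : F0.card = r := hunif _ hF0
  have hcardF : ∀ i, (F i).card = r := fun i => hunif _ (hFmem i)
  have hvi : ∀ i, v i ∈ F i := fun i => by
    have h : v i ∈ F i ∩ F0 := by rw [hFv i]; exact Finset.mem_singleton_self _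
    exact (Finset.mem_inter.mp h).1
  have hviF0 : ∀ i, v i ∈ F0 := fun i => Finset.mem_image_of_mem v (Finset.mem_univ i)
  have hFinj : Function.Injective F := by
    intro i j hFeq
    by_contra hne
    have h := hFdisj i j hne
    have hmem : v i ∈ F i ∩ F j := Finset.mem_inter.mpr ⟨hvi i, hFeq ▸ hvi i⟩
    rw [h] at hmem
    exact absurd hmem (Finset.notMem_empty _)
  have hF0notim : F0 ∉ Finset.univ.image F := by
    rw [Finset.mem_image]
    rintro ⟨i, -, hi⟩
    have h := hFv i
    rw [hi, Finset.inter_self] at h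
    have : F0.card = 1 := by rw [h]; exact Finset.card_singleton _
    omega
  have hnotF0 : ∀ i, ∀ w ∈ F i, w ≠ v i → w ∉ F0 := by
    intro i w hwi hne hw0
    have : w ∈ F i ∩ F0 := Finset.mem_inter.mpr ⟨hwi, hw0⟩
    rw [hFv i] at this
    exact hne (Finset.mem_singleton.mp this)
  set x : V → ℝ := fun w => if w ∈ F0 then a else if w ∈ H.vertexSet then 1 else 0 with hxdef
  have hx0 : ∀ w, 0 ≤ x w := by
    intro w; simp only [hxdef]
    split_ifs <;> norm_num [ha0.le]
  have hxF0 : ∀ w ∈ F0, x w = a := fun w hw => if_pos hw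
  have hxother : ∀ w ∈ H.vertexSet, w ∉ F0 → x w = 1 := by
    intro w hw hw0; simp only [hxdef, if_neg hw0, if_pos hw]
  refine ⟨x, hx0, ?_, ?_, ?_⟩
  · refine ⟨v ⟨0, by omega⟩, aux_subset_vertexSet hF0 (hviF0 _), ?_⟩
    rw [hxF0 _ (hviF0 _)]
    exact ne_of_gt ha0
  · rw [hedges, Finset.sum_insert hF0notim,
      Finset.sum_image (fun i _ j _ h => hFinj h)]
    have h1 : ∏ w ∈ F0, x w = a ^ r := by
      rw [Finset.prod_congr rfl hxF0, Finset.prod_const, hcard0]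
    have h2 : ∀ i : Fin r, ∏ w ∈ F i, x w = a := by
      intro i
      rw [← Finset.mul_prod_erase (F i) x (hvi i), hxF0 _ (hviF0 i)]
      have : ∏ w ∈ (F i).erase (v i), x w = 1 := by
        apply Finset.prod_eq_one
        intro w hw
        obtain ⟨hne, hwi⟩ := Finset.mem_erase.mp hw
        exact hxother w (aux_subset_vertexSet (hFmem i) hwi) (hnotF0 i w hwi hne)
      rw [this, mul_one]
    rw [h1, Finset.sum_congr rfl (fun i _ => h2 i), Finset.sum_const,
      Finset.card_univ, Fintype.card_fin, nsmul_eq_mul]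
  · have hsub : F0 ⊆ H.vertexSet := aux_subset_vertexSet hF0
    rw [← Finset.sum_sdiff hsub]
    have h1 : ∑ w ∈ F0, x w ^ r = r * a ^ r := by
      have : ∀ w ∈ F0, x w ^ r = a ^ r := fun w hw => by rw [hxF0 w hw]
      rw [Finset.sum_congr rfl this, Finset.sum_const, hcard0, nsmul_eq_mul]
    have hsd : H.vertexSet \ F0 = Finset.univ.biUnion (fun i => F i \ F0) := by
      ext w
      simp only [Finset.mem_sdiff, Finset.mem_biUnion, Finset.mem_univ, true_and]
      constructor
      · rintro ⟨hw, hw0⟩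
        obtain ⟨e, he, hwe⟩ := Finset.mem_biUnion.mp hw
        rw [hedges] at he
        rcases Finset.mem_insert.mp he with rfl | him
        · exact absurd hwe hw0
        · obtain ⟨i, -, rfl⟩ := Finset.mem_image.mp him
          exact ⟨i, hwe, hw0⟩
      · rintro ⟨i, hwi, hw0⟩
        exact ⟨aux_subset_vertexSet (hFmem i) hwi, hw0⟩
    have hcardsd : (H.vertexSet \ F0).card = r * (r - 1) := by
      rw [hsd, Finset.card_biUnion]
      · have heach : ∀ i : Fin r, (F i \ F0).card = r - 1 := by
          intro i
          have he : F i \ F0 = (F i).erase (v i) := by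
            ext w
            simp only [Finset.mem_sdiff, Finset.mem_erase]
            constructor
            · rintro ⟨hwi, hw0⟩
              refine ⟨fun h => hw0 (h ▸ hviF0 i), hwi⟩
            · rintro ⟨hne, hwi⟩
              exact ⟨hwi, hnotF0 i w hwi hne⟩
          rw [he, Finset.card_erase_of_mem (hvi i), hcardF]
        rw [Finset.sum_congr rfl (fun i _ => heach i), Finset.sum_const,
          Finset.card_univ, Fintype.card_fin, smul_eq_mul]
      · intro i _ j _ hij
        rw [Function.onFun, Finset.disjoint_left]
        intro w hwi hwj
        have : w ∈ F i ∩ F j :=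
          Finset.mem_inter.mpr ⟨(Finset.mem_sdiff.mp hwi).1, (Finset.mem_sdiff.mp hwj).1⟩
        rw [hFdisj i j hij] at this
        exact absurd this (Finset.notMem_empty _)
    have h2 : ∑ w ∈ H.vertexSet \ F0, x w ^ r = (r * (r - 1) : ℕ) := by
      have : ∀ w ∈ H.vertexSet \ F0, x w ^ r = 1 := by
        intro w hw
        obtain ⟨hw1, hw0⟩ := Finset.mem_sdiff.mp hw
        rw [hxother w hw1 hw0, one_pow]
      rw [Finset.sum_congr rfl this, Finset.sum_const, hcardsd, nsmul_eq_mul, mul_one]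
    rw [h1, h2]
    ring

lemma aux_numeric (r : ℕ) (hr : 6 ≤ r) :
    ∃ a : ℝ, 1 ≤ a ∧
      (2 + Real.sqrt 5) < ((a ^ r + r * a) / (a ^ r + (r : ℝ) - 1)) ^ r := by
  have h5 : Real.sqrt 5 < 2.2360680 := by
    rw [show (2.2360680:ℝ) = Real.sqrt (2.2360680 ^ 2) from (Real.sqrt_sq (by norm_num)).symm]
    exact Real.sqrt_lt_sqrt (by norm_num) (by norm_num)
  rcases eq_or_ne r 6 with rfl | h6
  · refine ⟨13/10, by norm_num, ?_⟩
    norm_num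
    nlinarith [h5]
  rcases eq_or_ne r 7 with rfl | h7
  · refine ⟨13/10, by norm_num, ?_⟩
    norm_num
    nlinarith [h5]
  have hr8 : 8 ≤ r := by omega
  set t : ℝ := (r : ℝ) with htdef
  have ht8 : (8:ℝ) ≤ t := by exact_mod_cast Nat.cast_le.mpr hr8
  have htpos : (0:ℝ) < t := by linarith
  have hden : (0:ℝ) < 2 * t - 1 := by linarith
  set b : ℝ := t ^ ((2*t)⁻¹) with hbdef
  set a : ℝ := t ^ (t⁻¹) with hadef
  have hb1 : 1 ≤ b := Real.one_le_rpow (by linarith) (by positivity)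
  have ha1 : 1 ≤ a := Real.one_le_rpow (by linarith) (by positivity)
  have har : a ^ r = t := by
    rw [hadef, ← Real.rpow_natCast (t ^ (t⁻¹)) r, ← Real.rpow_mul htpos.le,
      inv_mul_cancel₀ (ne_of_gt htpos), Real.rpow_one]
  have hbb : b * b = a := by
    rw [hbdef, hadef, ← Real.rpow_add htpos]
    congr 1
    field_simp
    norm_num
  have hbr : b ^ r = t ^ ((2:ℝ)⁻¹) := by
    rw [hbdef, ← Real.rpow_natCast (t ^ ((2*t)⁻¹)) r, ← Real.rpow_mul htpos.le]
    congr 1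
    field_simp
    rw [htdef]
  have hw : b ^ r * b ^ r = t := by
    rw [hbr, ← Real.rpow_add htpos, show (2:ℝ)⁻¹ + (2:ℝ)⁻¹ = 1 by norm_num, Real.rpow_one]
  have hwr1 : (1:ℝ) ≤ b ^ r := one_le_pow₀ hb1
  refine ⟨a, ha1, ?_⟩
  rw [har]
  set u : ℝ := (2*t)/(2*t-1) with hudef
  have hu0 : 0 ≤ u := le_of_lt (div_pos (by linarith) hden)
  have hphi : u * b ≤ (t + t * a) / (t + t - 1) := by
    have h2b : 2 * t * b ≤ t + t * a := by nlinarith [sq_nonneg (b - 1)]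
    have heq : u * b = (2 * t * b) / (2 * t - 1) := by rw [hudef]; ring
    rw [heq, show t + t - 1 = 2 * t - 1 by ring]
    gcongr
  have hub : 0 ≤ u * b := mul_nonneg hu0 (by linarith)
  have hu32 : (3:ℝ)/2 ≤ u ^ r := by
    have hueq : u = 1 + 1/(2*t-1) := by
      rw [hudef, eq_comm, one_add_div (ne_of_gt hden)]; congr 1; ring
    have hbern := one_add_mul_le_pow (a := 1/(2*t-1))
      (le_trans (by norm_num : (-2:ℝ) ≤ 0) (le_of_lt (div_pos one_pos hden))) r
    have h12 : (3:ℝ)/2 ≤ 1 + (r:ℝ) * (1/(2*t-1)) := by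
      have hx : (1:ℝ)/2 ≤ (r:ℝ)/(2*t-1) := by
        rw [div_le_div_iff₀ (by norm_num) hden]
        linarith [htdef.le, htdef.ge]
      rw [mul_one_div]
      linarith
    rw [hueq]
    exact le_trans h12 hbern
  calc 2 + Real.sqrt 5 < (3:ℝ)/2 * b ^ r := by
        nlinarith [hw, h5, Real.sq_sqrt (by norm_num : (5:ℝ) ≥ 0), Real.sqrt_nonneg 5, hwr1]
    _ ≤ u ^ r * b ^ r := by
        apply mul_le_mul_of_nonneg_right hu32 (by linarith)
    _ = (u * b) ^ r := (mul_pow u b r).symm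
    _ ≤ ((t + t * a) / (t + t - 1)) ^ r := pow_le_pow_left₀ hub hphi r

end AuxProof

/-- For every `r ≥ 6`, the `r`-uniform edge-star `S_r^{(r)}` has spectral radius
strictly greater than `(r−1)!·(2+√5)^{1/r}`. -/
theorem edgeStar_spectralRadius_gt {V : Type} [DecidableEq V] (r : ℕ) (hr : 6 ≤ r)
    (H : Hypergraph' V) (hH : H.IsEdgeStar r) :
    (Nat.factorial (r - 1) : ℝ) * (2 + Real.sqrt 5) ^ ((1 : ℝ) / (r : ℝ)) <
      H.spectralRadius r := by
  obtain ⟨a, ha1, hnum⟩ := aux_numeric r hr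
  obtain ⟨x, hx0, hxne, hN, hD⟩ := aux_edgeStar_sums r (by omega) H hH a ha1
  have hkey := aux_ratio_le r (by omega) H hH.1 x hx0 hxne
  rw [hN, hD] at hkey
  have htpos : (0:ℝ) < (r:ℝ) := by exact_mod_cast Nat.pos_of_ne_zero (by omega)
  have hr6 : (6:ℝ) ≤ (r:ℝ) := by exact_mod_cast hr
  have hapos : (0:ℝ) < a := lt_of_lt_of_le one_pos ha1
  have ha1r : (1:ℝ) ≤ a ^ r := one_le_pow₀ ha1
  have hDpos : (0:ℝ) < a ^ r + (r:ℝ) - 1 := by linarith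
  have hDden : (r:ℝ) * a ^ r + ((r * (r - 1) : ℕ) : ℝ) = (r:ℝ) * (a ^ r + (r:ℝ) - 1) := by
    push_cast [Nat.cast_sub (by omega : 1 ≤ r)]
    ring
  rw [hDden] at hkey
  set φ : ℝ := (a ^ r + (r:ℝ) * a) / (a ^ r + (r:ℝ) - 1) with hphidef
  have hfac : (r.factorial : ℝ) = (r:ℝ) * ((r-1).factorial : ℝ) := by
    rw [← Nat.mul_factorial_pred (by omega : r ≠ 0)]
    push_cast
    ring
  have hkey2 : ((r-1).factorial : ℝ) * φ ≤ H.spectralRadius r := by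
    have heq : (r.factorial : ℝ) * ((a ^ r + (r:ℝ) * a) / ((r:ℝ) * (a ^ r + (r:ℝ) - 1)))
        = ((r-1).factorial : ℝ) * φ := by
      rw [hfac, hphidef]
      field_simp
    exact heq ▸ hkey
  refine lt_of_lt_of_le ?_ hkey2
  have hfacpos : (0:ℝ) < ((r-1).factorial : ℝ) := by exact_mod_cast (r-1).factorial_pos
  apply mul_lt_mul_of_pos_left ?_ hfacpos
  have hφ0 : 0 ≤ φ := div_nonneg (by positivity) hDpos.le
  apply lt_of_pow_lt_pow_left₀ r hφ0
  have hcr : ((2 + Real.sqrt 5) ^ ((1:ℝ)/(r:ℝ))) ^ r = 2 + Real.sqrt 5 := by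
    rw [← Real.rpow_natCast ((2 + Real.sqrt 5) ^ ((1:ℝ)/(r:ℝ))) r,
      ← Real.rpow_mul (by positivity), one_div, inv_mul_cancel₀ (ne_of_gt htpos),
      Real.rpow_one]
  rw [hcr]
  exact hnum
end
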